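/- arXiv:2204.13227 — 7 statements merged into one kernel-verified Lean document; each statement's English description precedes it below -/
import Mathlib

section
/- Let l be a prime, n a positive integer, n' = ⌊n/l⌋. If P' is a Sylow l-subgroup of S_{n'}, then the semidirect product (ℤ/lℤ)^{n'} ⋊ P' (with P' acting by permuting coordinates via its action as a subgroup of S_{n'}) is isomorphic to a Sylow l-subgroup of S_n. -/
/-- The action of `Equiv.Perm ι` on `ι → M` by permuting coordinates,
as a homomorphism into the automorphism group. -/
def permHom (ι M : Type) [Group M] : Equiv.Perm ι →* MulAut (ι → M) where
  toFun σ := MulEquiv.arrowCongr σ (MulEquiv.refl M)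
  map_one' := by ext f i; rfl
  map_mul' σ τ := by ext f i; rfl

def shearHom (ι M : Type) [Group M] : (ι → M) →* Equiv.Perm (ι × M) where
  toFun f := Equiv.prodShear (Equiv.refl ι) (fun i => Equiv.mulLeft (f i))
  map_one' := by ext x <;> simp [Equiv.prodShear]
  map_mul' f g := by ext x <;> simp [Equiv.prodShear, Equiv.Perm.mul_apply, mul_assoc]

def fstHom (ι M : Type) : Equiv.Perm ι →* Equiv.Perm (ι × M) where
  toFun σ := σ.prodCongr (Equiv.refl M)
  map_one' := by ext x <;> simp
  map_mul' σ τ := by ext x <;> simp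

lemma compat (ι M : Type) [Group M] (g : Equiv.Perm ι) :
    (shearHom ι M).comp ((permHom ι M) g).toMonoidHom =
      (MulAut.conj ((fstHom ι M) g)).toMonoidHom.comp (shearHom ι M) := by
  refine MonoidHom.ext fun f => Equiv.ext fun x => ?_
  simp [shearHom, fstHom, permHom, MulEquiv.arrowCongr, Equiv.prodShear,
    Equiv.Perm.mul_apply, Equiv.Perm.inv_def, Equiv.prodCongr_apply, Prod.map,
    MulAut.conj]

/-- The wreath-product style embedding of `(ι → M) ⋊ P` into `Perm (ι × M)`. -/
def wreathPerm (ι M : Type) [Group M] (P : Subgroup (Equiv.Perm ι)) :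
    ((ι → M) ⋊[(permHom ι M).comp P.subtype] P) →* Equiv.Perm (ι × M) :=
  SemidirectProduct.lift (shearHom ι M) ((fstHom ι M).comp P.subtype)
    (fun g => compat ι M (g : Equiv.Perm ι))

lemma wreathPerm_injective (ι M : Type) [Group M] (P : Subgroup (Equiv.Perm ι)) :
    Function.Injective (wreathPerm ι M P) := by
  rw [injective_iff_map_eq_one]
  rintro ⟨f, p⟩ hx
  have key : ∀ i : ι,
      (((p : Equiv.Perm ι) i, f ((p : Equiv.Perm ι) i) * 1) : ι × M) = (i, 1) := by
    intro i
    have := DFunLike.congr_fun hx (i, (1 : M))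
    simpa [wreathPerm, SemidirectProduct.lift, shearHom, fstHom, Equiv.prodShear,
      Equiv.Perm.mul_apply] using this
  have hp : p = 1 := by
    ext i
    exact (Prod.ext_iff.1 (key i)).1
  have hf : f = 1 := by
    funext i
    have h1 := Prod.ext_iff.1 (key i)
    simpa [hp] using h1.2
  ext <;> simp [hp, hf]

lemma legendre_step {l : ℕ} (hl : l.Prime) (n : ℕ) :
    (Nat.factorial n).factorization l = n / l + (Nat.factorial (n / l)).factorization l := by
  haveI := Fact.mk hl
  rw [Nat.factorization_def _ hl, Nat.factorization_def _ hl,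
    ← padicValNat_mul_div_factorial (p := l) n, padicValNat_factorial_mul, add_comm]

/-- If `P'` is a Sylow `l`-subgroup of `S_{n'}` with `n' = ⌊n/l⌋`, then
`(ℤ/lℤ)^{n'} ⋊ P'` (with `P'` permuting coordinates) is isomorphic to a Sylow
`l`-subgroup of `S_n`. -/
theorem wreath_sylow (l n : ℕ) (hl : l.Prime) (hn : 0 < n)
    (P' : Sylow l (Equiv.Perm (Fin (n / l)))) :
    ∃ Q : Sylow l (Equiv.Perm (Fin n)),
      Nonempty (((Fin (n / l) → Multiplicative (ZMod l))
          ⋊[(permHom (Fin (n / l)) (Multiplicative (ZMod l))).comp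
              (P' : Subgroup (Equiv.Perm (Fin (n / l)))).subtype] P')
        ≃* (Q : Subgroup (Equiv.Perm (Fin n)))) := by
  haveI := Fact.mk hl
  have hle : Fintype.card (Fin (n / l) × Multiplicative (ZMod l)) ≤ n := by
    rw [Fintype.card_prod, Fintype.card_fin]
    have : Fintype.card (Multiplicative (ZMod l)) = l := by
      simp [ZMod.card]
    rw [this]
    exact Nat.div_mul_le_self n l
  have e : (Fin (n / l) × Multiplicative (ZMod l)) ↪ Fin n :=
    (Fintype.equivFin _).toEmbedding.trans (Fin.castLEOrderEmb hle).toEmbedding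
  let Φ := (Equiv.Perm.viaEmbeddingHom e).comp
    (wreathPerm (Fin (n / l)) (Multiplicative (ZMod l)) (P' : Subgroup (Equiv.Perm (Fin (n / l)))))
  have hΦinj : Function.Injective Φ :=
    (Equiv.Perm.viaEmbeddingHom_injective e).comp (wreathPerm_injective _ _ _)
  have hcardSDP : Nat.card (((Fin (n / l)) → Multiplicative (ZMod l))
        ⋊[(permHom (Fin (n / l)) (Multiplicative (ZMod l))).comp
            (P' : Subgroup (Equiv.Perm (Fin (n / l)))).subtype] P') =
      l ^ ((Nat.card (Equiv.Perm (Fin n))).factorization l) := by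
    have h1 : Nat.card (((Fin (n / l)) → Multiplicative (ZMod l))
        ⋊[(permHom (Fin (n / l)) (Multiplicative (ZMod l))).comp
            (P' : Subgroup (Equiv.Perm (Fin (n / l)))).subtype] P') =
        Nat.card ((Fin (n / l)) → Multiplicative (ZMod l)) * Nat.card P' := by
      rw [Nat.card_congr ⟨fun x => (x.1, x.2), fun y => ⟨y.1, y.2⟩,
        fun x => rfl, fun y => rfl⟩, Nat.card_prod]
    have h2 : Nat.card ((Fin (n / l)) → Multiplicative (ZMod l)) = l ^ (n / l) := by
      rw [Nat.card_pi]
      simp [Nat.card_congr Multiplicative.toAdd, Nat.card_zmod]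
    have h3 : Nat.card P' = l ^ ((Nat.factorial (n / l)).factorization l) := by
      rw [P'.card_eq_multiplicity, Nat.card_eq_fintype_card, Fintype.card_perm,
        Fintype.card_fin]
    rw [h1, h2, h3, ← pow_add, Nat.card_eq_fintype_card, Fintype.card_perm,
      Fintype.card_fin, legendre_step hl n]
  have hcardR : Nat.card Φ.range = l ^ ((Nat.card (Equiv.Perm (Fin n))).factorization l) := by
    rw [← hcardSDP]
    exact Nat.card_congr (MonoidHom.ofInjective hΦinj).toEquiv.symm
  exact ⟨Sylow.ofCard Φ.range hcardR, ⟨MonoidHom.ofInjective hΦinj⟩⟩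
end

section
/- Let G be a group of the form Δ ⋊ L with Δ abelian, and let k be a field with char k ∤ |G| such that every irreducible representation of Δ over k has degree 1. For a character ψ of Δ, let L_ψ = Stab_L(ψ) under the action (ψ^g)(a) = ψ(g a g⁻¹), let G_ψ = Δ·L_ψ, extend ψ to G_ψ by ψ(al) = ψ(a), let λ be an irreducible representation of L_ψ inflated to G_ψ, and set θ_{ψ,λ} = Ind_{G_ψ}^G(ψ ⊗ λ). Then θ_{ψ,λ} is an irreducible representation of G. -/
open SemidirectProduct

variable {k : Type} [Field k] {Δ L : Type} [Group Δ] [Group L] (φ : L →* MulAut Δ)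

/-- The stabilizer in `L` of a character `ψ` of `Δ`, for the action
`(ψ^l)(a) = ψ(l a l⁻¹) = ψ(φ l a)`. -/
def Lstab (ψ : Δ →* kˣ) : Subgroup L where
  carrier := {l | ∀ a, ψ (φ l a) = ψ a}
  one_mem' := by intro a; simp
  mul_mem' := by
    intro x y hx hy a
    rw [map_mul, MulAut.mul_apply, hx, hy]
  inv_mem' := by
    intro x hx a
    have h := hx (φ x⁻¹ a)
    rw [map_inv, MulAut.inv_def, MulEquiv.apply_symm_apply] at h
    rw [map_inv, MulAut.inv_def]
    exact h.symm

/-- The subgroup `G_ψ = Δ ⋊ L_ψ` of `G = Δ ⋊ L`. -/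
def Gstab (ψ : Δ →* kˣ) : Subgroup (Δ ⋊[φ] L) := (Lstab φ ψ).comap rightHom

/-- The extension of `ψ` to `G_ψ`, `ψ(al) = ψ(a)`. -/
def psiExt (ψ : Δ →* kˣ) : Gstab φ ψ →* kˣ where
  toFun g := ψ (g : Δ ⋊[φ] L).left
  map_one' := by simp
  map_mul' := by
    rintro ⟨g, hg⟩ ⟨g', hg'⟩
    show ψ ((g * g').left) = ψ g.left * ψ g'.left
    have h2 : g.right ∈ Lstab φ ψ := Subgroup.mem_comap.mp hg
    rw [mul_left, map_mul, h2 g'.left]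

/-- The projection `G_ψ → L_ψ`. -/
def toLstab (ψ : Δ →* kˣ) : Gstab φ ψ →* Lstab φ ψ :=
  MonoidHom.codRestrict (rightHom.comp (Gstab φ ψ).subtype) (Lstab φ ψ)
    (fun g => Subgroup.mem_comap.mp g.2)

variable {V : Type} [AddCommGroup V] [Module k V]

/-- The representation `ψ ⊗ λ` of `G_ψ`: `(al) ↦ ψ(a)·λ(l)`. -/
def twistRep (ψ : Δ →* kˣ) (lam : Representation k (Lstab φ ψ) V) :
    Representation k (Gstab φ ψ) V where
  toFun g := (psiExt φ ψ g : k) • lam (toLstab φ ψ g)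
  map_one' := by simp
  map_mul' g h := by
    apply LinearMap.ext
    intro v
    simp [map_mul, Units.val_mul, Module.End.mul_apply, smul_smul, LinearMap.map_smul]
    rw [mul_comm]

variable {G : Type} [Group G]

/-- The carrier of the induced representation `Ind_H^G ρ`: functions `f : G → V`
with `f(hg) = ρ(h) f(g)` for `h ∈ H`. -/
def IndSubmodule (H : Subgroup G) (ρ : Representation k H V) : Submodule k (G → V) where
  carrier := {f | ∀ (h : H) (g : G), f (↑h * g) = ρ h (f g)}
  zero_mem' := by intro h g; simp
  add_mem' := by
    intro f f' hf hf' h g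
    simp [hf h g, hf' h g]
  smul_mem' := by
    intro c f hf h g
    simp [hf h g]

/-- The induced representation `Ind_H^G ρ`, with `G` acting by right translation. -/
def IndRep (H : Subgroup G) (ρ : Representation k H V) :
    Representation k G (IndSubmodule H ρ) where
  toFun g₀ :=
    { toFun := fun f => ⟨fun x => (f : G → V) (x * g₀), fun h g => by
        simpa [mul_assoc] using f.2 h (g * g₀)⟩
      map_add' := fun f f' => by
        apply Subtype.ext
        funext x
        simp
      map_smul' := fun c f => by
        apply Subtype.ext
        funext x
        simp }
  map_one' := by
    apply LinearMap.ext
    intro f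
    apply Subtype.ext
    funext x
    simp
  map_mul' a b := by
    apply LinearMap.ext
    intro f
    apply Subtype.ext
    funext x
    simp [mul_assoc]

/-- `ρ.asModule` is a type synonym for `V`, so inherits its `AddCommGroup` structure. -/
instance asModuleAddCommGroup {k G V : Type} [CommSemiring k] [Monoid G] [AddCommGroup V]
    [Module k V] (ρ : Representation k G V) : AddCommGroup ρ.asModule :=
  inferInstanceAs (AddCommGroup V)

/-! Averaging a vector `f` of `Ind (ψ ⊗ λ)` over `Δ` against `ψ⁻¹` cuts it down to the part
supported on `G_ψ`: at `x` the weight is the sum over `Δ` of the character `ψ⁻¹ · ψ^x`, which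
vanishes unless `x ∈ G_ψ`, and `|Δ|` is invertible in `k`. Hence a nonzero subrepresentation
contains a nonzero function supported on `G_ψ`. Such functions form a copy of `ψ ⊗ λ`, which is
irreducible with `λ`, so the subrepresentation contains all of them; since `|G_ψ|` is invertible,
their `G`-translates span the whole induced representation. -/

theorem natCast_ne_zero_of_dvd {m n : ℕ} (hn : ¬ ringChar k ∣ n) (hmn : m ∣ n) :
    (m : k) ≠ 0 := by
  rw [Ne, ringChar.spec]
  exact fun hm => hn (hm.trans hmn)

theorem sum_apply_inv_mul_apply_eq_zero {R Γ : Type} [CommRing R] [IsDomain R] [Group Γ]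
    [Fintype Γ] {χ₁ χ₂ : Γ →* Rˣ} (h : χ₁ ≠ χ₂) : ∑ a, (χ₁ a⁻¹ : R) * χ₂ a = 0 := by
  refine (by simpa using ·) <| sum_hom_units_eq_zero ((Units.coeHom R).comp (χ₁⁻¹ * χ₂))
    fun h1 => h (MonoidHom.ext fun a => ?_)
  simpa [inv_mul_eq_one, Units.ext_iff] using DFunLike.congr_fun h1 a

namespace Subrepresentation

variable {W : Type} [AddCommGroup W] [Module k W] {ρ : Representation k G W}

theorem mem_bot {w : W} : w ∈ (⊥ : Subrepresentation ρ) ↔ w = 0 := Submodule.mem_bot k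

theorem exists_mem_ne_zero_of_ne_bot {σ : Subrepresentation ρ} (hσ : σ ≠ ⊥) :
    ∃ w ∈ σ, w ≠ 0 := by
  by_contra! h
  exact hσ (SetLike.ext fun w => ⟨fun hw => mem_bot.mpr (h w hw), fun hw => by
    rw [mem_bot.mp hw]; exact σ.toSubmodule.zero_mem⟩)

end Subrepresentation

section Induced

variable {H : Subgroup G} (ρ : Representation k H V)

open Classical in
noncomputable def indSingle : V →ₗ[k] IndSubmodule H ρ where
  toFun v := ⟨fun x => if hx : x ∈ H then ρ ⟨x, hx⟩ v else 0, fun h g => by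
    by_cases hg : g ∈ H
    · simp only [dif_pos hg, dif_pos (mul_mem h.2 hg)]
      exact congr($(map_mul ρ h ⟨g, hg⟩) v)
    · have hhg : ↑h * g ∉ H := fun hc => hg (by simpa using mul_mem (inv_mem h.2) hc)
      simp [hg, hhg]⟩
  map_add' v w := Subtype.ext <| funext fun x => by by_cases hx : x ∈ H <;> simp [hx]
  map_smul' c v := Subtype.ext <| funext fun x => by by_cases hx : x ∈ H <;> simp [hx]

variable {ρ}

theorem IndSubmodule.apply_of_mem (f : IndSubmodule H ρ) {x : G} (hx : x ∈ H) :
    (f : G → V) x = ρ ⟨x, hx⟩ ((f : G → V) 1) := by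
  simpa using f.2 ⟨x, hx⟩ 1

theorem IndRep_apply (g : G) (f : IndSubmodule H ρ) (x : G) :
    (IndRep H ρ g f : G → V) x = (f : G → V) (x * g) := rfl

theorem indSingle_apply_of_mem (v : V) {x : G} (hx : x ∈ H) :
    (indSingle ρ v : G → V) x = ρ ⟨x, hx⟩ v := dif_pos hx

theorem indSingle_apply_of_notMem (v : V) {x : G} (hx : x ∉ H) :
    (indSingle ρ v : G → V) x = 0 := dif_neg hx

theorem indSingle_apply_one (v : V) : (indSingle ρ v : G → V) 1 = v := by
  rw [indSingle_apply_of_mem v (one_mem H)]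
  exact congr($(map_one ρ) v)

theorem indSingle_injective : Function.Injective (indSingle ρ) := fun v w h => by
  simpa only [indSingle_apply_one] using congr(($h : G → V) 1)

theorem IndRep_indSingle (h : H) (v : V) :
    IndRep H ρ h (indSingle ρ v) = indSingle ρ (ρ h v) := by
  refine Subtype.ext <| funext fun x => ?_
  rw [IndRep_apply]
  by_cases hx : x ∈ H
  · rw [indSingle_apply_of_mem _ (mul_mem hx h.2), indSingle_apply_of_mem _ hx]
    exact congr($(map_mul ρ ⟨x, hx⟩ h) v)
  · have hxh : x * h ∉ H := fun hc => hx (by simpa using mul_mem hc (inv_mem h.2))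
    rw [indSingle_apply_of_notMem _ hxh, indSingle_apply_of_notMem _ hx]

theorem sum_IndRep_inv_indSingle [Fintype G] (f : IndSubmodule H ρ) :
    ∑ g : G, IndRep H ρ g⁻¹ (indSingle ρ ((f : G → V) g)) = Nat.card H • f := by
  classical
  refine Subtype.ext <| funext fun x => ?_
  simp only [AddSubmonoidClass.coe_finsetSum, Finset.sum_apply, Submodule.coe_smul_of_tower,
    Pi.smul_apply]
  calc ∑ g : G, (indSingle ρ ((f : G → V) g) : G → V) (x * g⁻¹)
      = ∑ u : G, (indSingle ρ ((f : G → V) (u⁻¹ * x)) : G → V) u :=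
        Fintype.sum_equiv ((Equiv.inv G).trans (Equiv.mulLeft x)) _ _ fun g => by simp
    _ = ∑ u : G, if u ∈ H then (f : G → V) x else 0 := by
        refine Finset.sum_congr rfl fun u _ => ?_
        split_ifs with hu
        · rw [indSingle_apply_of_mem _ hu, ← f.2 ⟨u, hu⟩, mul_inv_cancel_left]
        · exact indSingle_apply_of_notMem _ hu
    _ = Nat.card H • (f : G → V) x := by
        rw [← Finset.sum_filter, Finset.sum_const, ← Fintype.card_subtype,
          Nat.card_eq_fintype_card]

noncomputable def comapIndSingle (σ : Subrepresentation (IndRep H ρ)) : Subrepresentation ρ where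
  toSubmodule := σ.toSubmodule.comap (indSingle ρ)
  apply_mem_toSubmodule h v hv := by
    rw [Submodule.mem_comap, ← IndRep_indSingle]
    exact σ.apply_mem_toSubmodule h hv

theorem mem_comapIndSingle {σ : Subrepresentation (IndRep H ρ)} {v : V} :
    v ∈ comapIndSingle σ ↔ indSingle ρ v ∈ σ := Iff.rfl

theorem comapIndSingle_bot : comapIndSingle (⊥ : Subrepresentation (IndRep H ρ)) = ⊥ :=
  SetLike.ext fun v => by
    rw [mem_comapIndSingle, Subrepresentation.mem_bot, Subrepresentation.mem_bot,
      indSingle_injective.eq_iff' (map_zero _)]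

theorem comapIndSingle_top : comapIndSingle (⊤ : Subrepresentation (IndRep H ρ)) = ⊤ :=
  SetLike.ext fun _ => Iff.rfl

theorem eq_top_of_forall_indSingle_mem [Finite G] (hH : (Nat.card H : k) ≠ 0)
    {σ : Subrepresentation (IndRep H ρ)} (hσ : ∀ v, indSingle ρ v ∈ σ) : σ = ⊤ := by
  have := Fintype.ofFinite G
  refine eq_top_iff.mpr fun f _ => ?_
  have hsum : Nat.card H • f ∈ σ.toSubmodule := sum_IndRep_inv_indSingle f ▸
    σ.toSubmodule.sum_mem fun g _ => σ.apply_mem_toSubmodule _ (hσ _)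
  rwa [← Nat.cast_smul_eq_nsmul k, Submodule.smul_mem_iff _ hH] at hsum

theorem indSingle_mem_of_ne_bot [ρ.IsIrreducible]
    (hproj : ∀ σ : Subrepresentation (IndRep H ρ), ∀ f ∈ σ, indSingle ρ ((f : G → V) 1) ∈ σ)
    {σ : Subrepresentation (IndRep H ρ)} (hσ : σ ≠ ⊥) (v : V) : indSingle ρ v ∈ σ := by
  obtain ⟨f, hf, hf0⟩ := Subrepresentation.exists_mem_ne_zero_of_ne_bot hσ
  obtain ⟨g, hg⟩ := Function.ne_iff.mp fun h => hf0 (Subtype.ext h)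
  have hfg : indSingle ρ ((f : G → V) g) ∈ σ := by
    simpa [IndRep_apply] using hproj σ _ (σ.apply_mem_toSubmodule g hf)
  have hne : comapIndSingle σ ≠ ⊥ := fun h =>
    hg (Subrepresentation.mem_bot.mp (h ▸ mem_comapIndSingle.mpr hfg))
  rw [← mem_comapIndSingle, (IsSimpleOrder.eq_bot_or_eq_top _).resolve_left hne]
  exact Submodule.mem_top

/-- `f ↦ indSingle ρ (f 1)` cuts `f` down to its restriction to `H`. -/
theorem isIrreducible_IndRep_of_indSingle_mem [Finite G] [ρ.IsIrreducible]
    (hH : (Nat.card H : k) ≠ 0)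
    (hproj : ∀ σ : Subrepresentation (IndRep H ρ), ∀ f ∈ σ, indSingle ρ ((f : G → V) 1) ∈ σ) :
    (IndRep H ρ).IsIrreducible where
  exists_pair_ne := ⟨⊥, ⊤, fun h => bot_ne_top (α := Subrepresentation ρ) <| by
    rw [← comapIndSingle_bot, h, comapIndSingle_top]⟩
  eq_bot_or_eq_top σ := or_iff_not_imp_left.mpr fun hσ =>
    eq_top_of_forall_indSingle_mem hH (indSingle_mem_of_ne_bot hproj hσ)

end Induced

section SemidirectProduct

variable (ψ : Δ →* kˣ) (lam : Representation k (Lstab φ ψ) V)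

theorem mul_inl_eq_inl_mul (x : Δ ⋊[φ] L) (a : Δ) :
    x * inl a = inl (x.left * φ x.right a * x.left⁻¹) * x := by
  ext <;> simp

theorem inl_mem_Gstab (a : Δ) : inl a ∈ Gstab φ ψ := by
  simp [Gstab, one_mem]

theorem twistRep_inl_apply (a : Δ) (v : V) :
    twistRep φ ψ lam ⟨inl a, inl_mem_Gstab φ ψ a⟩ v = (ψ a : k) • v := by
  have h1 : toLstab φ ψ ⟨inl a, inl_mem_Gstab φ ψ a⟩ = 1 := Subtype.ext (by simp [toLstab])
  simp [twistRep, psiExt, h1]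

theorem inr_mem_Gstab (l : Lstab φ ψ) : inr (l : L) ∈ Gstab φ ψ := by
  simp [Gstab]

theorem twistRep_inr_apply (l : Lstab φ ψ) (v : V) :
    twistRep φ ψ lam ⟨inr (l : L), inr_mem_Gstab φ ψ l⟩ v = lam l v := by
  have h1 : toLstab φ ψ ⟨inr (l : L), inr_mem_Gstab φ ψ l⟩ = l := Subtype.ext (by simp [toLstab])
  simp [twistRep, psiExt, h1]

def subrepresentationTwistRepOrderIso :
    Subrepresentation (twistRep φ ψ lam) ≃o Subrepresentation lam where
  toFun σ := ⟨σ.toSubmodule, fun l v hv => by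
    rw [← twistRep_inr_apply]
    exact σ.apply_mem_toSubmodule _ hv⟩
  invFun τ := ⟨τ.toSubmodule, fun g v hv => τ.toSubmodule.smul_mem _ (τ.apply_mem_toSubmodule _ hv)⟩
  left_inv _ := rfl
  right_inv _ := rfl
  map_rel_iff' := Iff.rfl

instance isIrreducible_twistRep [lam.IsIrreducible] : (twistRep φ ψ lam).IsIrreducible :=
  (subrepresentationTwistRepOrderIso φ ψ lam).isSimpleOrder

theorem IndRep_inl_apply (f : IndSubmodule (Gstab φ ψ) (twistRep φ ψ lam)) (a : Δ)
    (x : Δ ⋊[φ] L) :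
    (IndRep (Gstab φ ψ) (twistRep φ ψ lam) (inl a) f : Δ ⋊[φ] L → V) x =
      (ψ (φ x.right a) : k) • (f : Δ ⋊[φ] L → V) x := by
  rw [IndRep_apply, mul_inl_eq_inl_mul, f.2 ⟨_, inl_mem_Gstab φ ψ _⟩ x, twistRep_inl_apply]
  -- `ψ` is constant on conjugacy classes, as `kˣ` is commutative
  rw [map_mul, map_mul, mul_right_comm, ← map_mul, mul_inv_cancel, map_one, one_mul]

theorem sum_apply_inv_mul_apply_aut_of_mem [Fintype Δ] {l : L} (hl : l ∈ Lstab φ ψ) :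
    ∑ a, (ψ a⁻¹ : k) * ψ (φ l a) = Nat.card Δ := by
  have h1 (a : Δ) : (ψ a⁻¹ : k) * ψ (φ l a) = 1 := by
    rw [hl a, ← Units.val_mul, ← map_mul, inv_mul_cancel, map_one, Units.val_one]
  simp only [h1, Finset.sum_const, Finset.card_univ, nsmul_one, Nat.card_eq_fintype_card]

theorem sum_apply_inv_mul_apply_aut_of_notMem [Fintype Δ] {l : L} (hl : l ∉ Lstab φ ψ) :
    ∑ a, (ψ a⁻¹ : k) * ψ (φ l a) = 0 :=
  sum_apply_inv_mul_apply_eq_zero (χ₂ := ψ.comp (φ l).toMonoidHom)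
    fun h => hl fun a => (DFunLike.congr_fun h a).symm

theorem sum_smul_IndRep_inl [Fintype Δ] (f : IndSubmodule (Gstab φ ψ) (twistRep φ ψ lam)) :
    ∑ a : Δ, (ψ a⁻¹ : k) • IndRep (Gstab φ ψ) (twistRep φ ψ lam) (inl a) f =
      Nat.card Δ • indSingle (twistRep φ ψ lam) ((f : Δ ⋊[φ] L → V) 1) := by
  refine Subtype.ext <| funext fun x => ?_
  simp only [AddSubmonoidClass.coe_finsetSum, Finset.sum_apply, Submodule.coe_smul_of_tower,
    Pi.smul_apply, IndRep_inl_apply, smul_smul, ← Finset.sum_smul]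
  by_cases hx : x ∈ Gstab φ ψ
  · rw [sum_apply_inv_mul_apply_aut_of_mem φ ψ (l := x.right) hx, indSingle_apply_of_mem _ hx,
      ← IndSubmodule.apply_of_mem, Nat.cast_smul_eq_nsmul]
  · rw [sum_apply_inv_mul_apply_aut_of_notMem φ ψ (l := x.right) hx,
      indSingle_apply_of_notMem _ hx, zero_smul, smul_zero]

theorem indSingle_apply_one_mem [Finite Δ] (hΔ : (Nat.card Δ : k) ≠ 0)
    {σ : Subrepresentation (IndRep (Gstab φ ψ) (twistRep φ ψ lam))}
    {f : IndSubmodule (Gstab φ ψ) (twistRep φ ψ lam)} (hf : f ∈ σ) :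
    indSingle (twistRep φ ψ lam) ((f : Δ ⋊[φ] L → V) 1) ∈ σ := by
  have := Fintype.ofFinite Δ
  have hsum := sum_smul_IndRep_inl φ ψ lam f ▸
    σ.toSubmodule.sum_mem fun a _ => σ.toSubmodule.smul_mem _ (σ.apply_mem_toSubmodule (inl a) hf)
  rwa [← Nat.cast_smul_eq_nsmul k, Submodule.smul_mem_iff _ hΔ] at hsum

end SemidirectProduct

theorem wigner_mackey_irreducible_general {k : Type} [Field k] {Δ L : Type} [CommGroup Δ] [Group L]
    [Finite Δ] [Finite L] (φ : L →* MulAut Δ)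
    (hchar : ¬ ((ringChar k : ℕ) ∣ Nat.card (Δ ⋊[φ] L)))
    (ψ : Δ →* kˣ) (V : Type) [AddCommGroup V] [Module k V]
    (lam : Representation k (Lstab φ ψ) V)
    (hlam : IsSimpleModule (MonoidAlgebra k (Lstab φ ψ)) lam.asModule) :
    IsSimpleModule (MonoidAlgebra k (Δ ⋊[φ] L))
      (IndRep (Gstab φ ψ) (twistRep φ ψ lam)).asModule := by
  have : Finite (Δ ⋊[φ] L) := Finite.of_equiv _ SemidirectProduct.equivProd.symm
  have : lam.IsIrreducible := (Representation.irreducible_iff_isSimpleModule_asModule lam).mpr hlam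
  have hΔ : (Nat.card Δ : k) ≠ 0 := natCast_ne_zero_of_dvd hchar ⟨_, SemidirectProduct.card⟩
  have hGψ : (Nat.card (Gstab φ ψ) : k) ≠ 0 :=
    natCast_ne_zero_of_dvd hchar (Subgroup.card_subgroup_dvd_card _)
  exact (Representation.irreducible_iff_isSimpleModule_asModule _).mp <|
    isIrreducible_IndRep_of_indSingle_mem hGψ fun _ _ hf => indSingle_apply_one_mem φ ψ lam hΔ hf

/-- Wigner–Mackey: for `G = Δ ⋊ L` with `Δ` abelian, `char k ∤ |G|`, and all irreducible
representations of `Δ` over `k` of degree 1, the representation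
`θ_{ψ,λ} = Ind_{G_ψ}^G(ψ ⊗ λ)` is irreducible, for any character `ψ` of `Δ` and any
irreducible representation `λ` of `L_ψ`. -/
theorem wigner_mackey_irreducible {k : Type} [Field k] {Δ L : Type} [CommGroup Δ] [Group L]
    [Finite Δ] [Finite L] (φ : L →* MulAut Δ)
    (hchar : ¬ ((ringChar k : ℕ) ∣ Nat.card (Δ ⋊[φ] L)))
    (hdeg : ∀ (W : Type) [AddCommGroup W] [Module k W] (τ : Representation k Δ W),
      IsSimpleModule (MonoidAlgebra k Δ) τ.asModule → Module.finrank k W = 1)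
    (ψ : Δ →* kˣ) (V : Type) [AddCommGroup V] [Module k V] [FiniteDimensional k V]
    (lam : Representation k (Lstab φ ψ) V)
    (hlam : IsSimpleModule (MonoidAlgebra k (Lstab φ ψ)) lam.asModule) :
    IsSimpleModule (MonoidAlgebra k (Δ ⋊[φ] L))
      (IndRep (Gstab φ ψ) (twistRep φ ψ lam)).asModule :=
  wigner_mackey_irreducible_general φ hchar ψ V lam hlam
end

section
/- Let p be a prime, k a field with char k ≠ p containing a primitive p-th root of unity, H a finite p-group, and (ρ_i : H → GL(V_i))_{1≤i≤n} a family of irreducible representations of H over k with central characters χ_i. If the restrictions {χ_i|_{Ω₁(Z(H))} : 1 ≤ i ≤ n} span the character group of Ω₁(Z(H)), then ⊕_i ρ_i is a faithful representation of H. -/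
open scoped IsMulCommutative in
/-- The socle `Ω₁(Z(H)) = {z ∈ Z(H) : z^p = 1}`, as a subgroup of the center. -/
def socle (H : Type) [Group H] (p : ℕ) : Subgroup (Subgroup.center H) :=
  MonoidHom.ker (powMonoidHom p : Subgroup.center H →* Subgroup.center H)

theorem CommGroup.exists_apply_ne_one_of_isPrimitiveRoot {G K : Type*} [CommGroup G] [Finite G]
    [CommRing K] [IsDomain K] {p : ℕ} [NeZero p] {ζ : K} (hζ : IsPrimitiveRoot ζ p)
    (hG : ∀ g : G, g ^ p = 1) {a : G} (ha : a ≠ 1) : ∃ φ : G →* Kˣ, φ a ≠ 1 := by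
  have : HasEnoughRootsOfUnity K p := ⟨⟨ζ, hζ⟩, inferInstance⟩
  have := HasEnoughRootsOfUnity.of_dvd K (Monoid.exponent_dvd_of_forall_pow_eq_one hG)
  exact exists_apply_ne_one_of_hasEnoughRootsOfUnity G K ha

theorem MonoidHom.apply_eq_one_of_closure_eq_top {A M : Type*} [MulOneClass A] [CommGroup M]
    {S : Set (A →* M)} (hS : Subgroup.closure S = ⊤) {a : A} (ha : ∀ ψ ∈ S, ψ a = 1)
    (φ : A →* M) : φ a = 1 := by
  have hle : Subgroup.closure S ≤ (MonoidHom.eval a).ker := (Subgroup.closure_le _).mpr ha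
  exact hle (hS ▸ Subgroup.mem_top φ)

theorem Module.End.smul_id_eq_one_iff {k V : Type*} [Field k] [AddCommGroup V] [Module k V]
    [Nontrivial V] {c : k} : c • (LinearMap.id : V →ₗ[k] V) = 1 ↔ c = 1 := by
  rw [← Module.algebraMap_end_eq_smul_id, map_eq_one_iff _ (algebraMap k _).injective]

section PGroup

variable {p : ℕ} [Fact p.Prime] {H : Type*} [Group H] [Finite H]

open Subgroup

theorem IsPGroup.inf_center_ne_bot (hH : IsPGroup p H) {N : Subgroup H} [N.Normal]
    (hN : N ≠ ⊥) : N ⊓ center H ≠ ⊥ := by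
  have hp : p ∣ Nat.card N :=
    (hH.to_subgroup N).card_eq_or_dvd.resolve_left (by rwa [card_eq_one])
  have hfix : (1 : N) ∈ MulAction.fixedPoints (ConjAct H) N := fun g => by ext; simp
  obtain ⟨b, hb, hb1⟩ :=
    (hH.of_equiv ConjAct.toConjAct).exists_fixed_point_of_prime_dvd_card_of_fixed_point N hp hfix
  have hbc : (b : H) ∈ center H := by
    rw [← SetLike.mem_coe, ← ConjAct.fixedPoints_eq_center]
    intro g
    rw [← ConjAct.Subgroup.val_conj_smul, hb g]
  exact ne_bot_iff_exists_ne_one.mpr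
    ⟨⟨b, b.2, hbc⟩, fun h => hb1 (Subtype.ext (congrArg Subtype.val h).symm)⟩

theorem IsPGroup.exists_orderOf_eq_prime_mem (hH : IsPGroup p H) {K : Subgroup H}
    (hK : K ≠ ⊥) : ∃ z ∈ K, orderOf z = p := by
  have hp : p ∣ Nat.card K :=
    (hH.to_subgroup K).card_eq_or_dvd.resolve_left (by rwa [card_eq_one])
  obtain ⟨z, hz⟩ := exists_prime_orderOf_dvd_card' p hp
  exact ⟨z, z.2, by rwa [orderOf_coe]⟩

end PGroup

open scoped IsMulCommutative in
theorem mem_socle_iff {H : Type} [Group H] {p : ℕ} {z : Subgroup.center H} :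
    z ∈ socle H p ↔ z ^ p = 1 :=
  MonoidHom.mem_ker

open scoped IsMulCommutative in
theorem exists_monoidHom_socle_apply_ne_one {H : Type} [Group H] [Finite H] {p : ℕ} [NeZero p]
    {K : Type*} [CommRing K] [IsDomain K] {ζ : K} (hζ : IsPrimitiveRoot ζ p) {z : socle H p}
    (hz : z ≠ 1) : ∃ φ : socle H p →* Kˣ, φ z ≠ 1 :=
  CommGroup.exists_apply_ne_one_of_isPrimitiveRoot hζ
    (fun a => Subtype.ext (mem_socle_iff.mp a.2)) hz

theorem IsPGroup.exists_ne_one_mem_socle {p : ℕ} [Fact p.Prime] {H : Type} [Group H] [Finite H]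
    (hH : IsPGroup p H) {N : Subgroup H} [N.Normal] (hN : N ≠ ⊥) :
    ∃ z : socle H p, z ≠ 1 ∧ ((z : Subgroup.center H) : H) ∈ N := by
  obtain ⟨z, ⟨hzN, hzc⟩, hz⟩ := hH.exists_orderOf_eq_prime_mem (hH.inf_center_ne_bot hN)
  refine ⟨⟨⟨z, hzc⟩, mem_socle_iff.mpr (Subtype.ext ?_)⟩, fun h => ?_, hzN⟩
  · simp [← hz, pow_orderOf_eq_one]
  · have : z = 1 := congrArg (fun x : socle H p => ((x : Subgroup.center H) : H)) h
    exact (Fact.out : p.Prime).one_lt.ne' (by rw [← hz, this, orderOf_one])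

theorem meyer_reichstein_faithful_general (p : ℕ) (hp : p.Prime)
    (k : Type) [Field k] (ζ : k) (hζ : IsPrimitiveRoot ζ p)
    (H : Type) [Group H] [Finite H] (hH : IsPGroup p H)
    (n : ℕ) (V : Fin n → Type) [∀ i, AddCommGroup (V i)] [∀ i, Module k (V i)]
    (ρ : ∀ i, Representation k H (V i))
    (hirr : ∀ i, IsSimpleModule (MonoidAlgebra k H) (ρ i).asModule)
    (χ : Fin n → (Subgroup.center H →* kˣ))
    (hcentral : ∀ i (z : Subgroup.center H),
      ρ i (z : H) = (χ i z : k) • (LinearMap.id : V i →ₗ[k] V i))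
    (hspan : Subgroup.closure
        (Set.range fun i => (χ i).comp (socle H p).subtype) = (⊤ : Subgroup (socle H p →* kˣ))) :
    Function.Injective (fun h : H => fun i => ρ i h) := by
  have : Fact p.Prime := ⟨hp⟩
  refine (MonoidHom.ker_eq_bot_iff (MonoidHom.pi ρ)).mp ?_
  by_contra hker
  obtain ⟨z, hz1, hzker⟩ := hH.exists_ne_one_mem_socle hker
  have hχz : ∀ i, χ i z = 1 := fun i => by
    have : Nontrivial (V i) := IsSimpleModule.nontrivial (MonoidAlgebra k H) (ρ i).asModule
    rw [← Units.val_eq_one, ← Module.End.smul_id_eq_one_iff (V := V i), ← hcentral]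
    exact congrFun (MonoidHom.mem_ker.mp hzker) i
  obtain ⟨φ, hφ⟩ := exists_monoidHom_socle_apply_ne_one hζ hz1
  exact hφ <| MonoidHom.apply_eq_one_of_closure_eq_top hspan (by rintro _ ⟨i, rfl⟩; exact hχz i) φ

/-- Meyer–Reichstein: let `p` be a prime, `k` a field of characteristic `≠ p` containing a
primitive `p`-th root of unity, `H` a finite `p`-group, and `(ρ_i)` a family of irreducible
representations of `H` over `k` with central characters `χ_i`.  If the restrictions of the
`χ_i` to `Ω₁(Z(H))` generate its character group, then `⊕ρ_i` is faithful, i.e. the only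
element of `H` acting trivially in every `ρ_i` is the identity. -/
theorem meyer_reichstein_faithful (p : ℕ) (hp : p.Prime)
    (k : Type) [Field k] (hchar : ringChar k ≠ p) (ζ : k) (hζ : IsPrimitiveRoot ζ p)
    (H : Type) [Group H] [Finite H] (hH : IsPGroup p H)
    (n : ℕ) (V : Fin n → Type) [∀ i, AddCommGroup (V i)] [∀ i, Module k (V i)]
    (ρ : ∀ i, Representation k H (V i))
    (hirr : ∀ i, IsSimpleModule (MonoidAlgebra k H) (ρ i).asModule)
    (χ : Fin n → (Subgroup.center H →* kˣ))
    (hcentral : ∀ i (z : Subgroup.center H),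
      ρ i (z : H) = (χ i z : k) • (LinearMap.id : V i →ₗ[k] V i))
    (hspan : Subgroup.closure
        (Set.range fun i => (χ i).comp (socle H p).subtype) = (⊤ : Subgroup (socle H p →* kˣ))) :
    Function.Injective (fun h : H => fun i => ρ i h) :=
  meyer_reichstein_faithful_general p hp k ζ hζ H hH n V ρ hirr χ hcentral hspan
end

section
/- Let l be a prime, s, n₀ positive integers, and let P = (ℤ/l^sℤ)^{n₀} ⋊ P_l(S_{n₀}) where P_l(S_{n₀}) is a Sylow l-subgroup of S_{n₀} acting by permuting coordinates. Then the center Z(P) is isomorphic to (ℤ/l^sℤ)^{r}, where r = Σ_{k=0}^{μ_l(n₀)} (⌊n₀/l^k⌋ − l⌊n₀/l^{k+1}⌋) and μ_l(n₀) is the largest integer d with l^d ≤ n₀. -/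
open MulAction

theorem SemidirectProduct.mem_center_iff {N G : Type*} [CommGroup N] [Group G]
    {φ : G →* MulAut N} (hφ : Function.Injective φ) {z : N ⋊[φ] G} :
    z ∈ Subgroup.center (N ⋊[φ] G) ↔ z.right = 1 ∧ ∀ g, φ g z.left = z.left := by
  rw [Subgroup.mem_center_iff]
  constructor
  · intro hz
    refine ⟨hφ ?_, fun g ↦ ?_⟩
    · ext n
      have := congrArg left (hz (inl n))
      simp only [mul_left, left_inl, right_inl, map_one, MulAut.one_apply] at this
      simpa [mul_comm n] using this.symm
    · simpa using congrArg left (hz (inr g))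
  · rintro ⟨hright, hleft⟩ w
    ext
    · simp [hright, hleft, mul_comm]
    · simp [hright]

theorem permHom_apply {ι M : Type} [Group M] (σ : Equiv.Perm ι) (a : ι → M) (i : ι) :
    permHom ι M σ a i = a (σ⁻¹ i) := rfl

theorem permHom_injective (ι M : Type) [Group M] [Nontrivial M] :
    Function.Injective (permHom ι M) := by
  classical
  refine (injective_iff_map_eq_one _).mpr fun σ hσ ↦ Equiv.ext fun j ↦ ?_
  obtain ⟨x, hx⟩ := exists_ne (1 : M)
  rw [Equiv.Perm.one_apply]
  by_contra hne
  have := congrFun (DFunLike.congr_fun hσ (Pi.mulSingle j x)) (σ j)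
  exact hx (by simpa [permHom_apply, Pi.mulSingle_eq_of_ne hne] using this)

theorem permHom_apply_eq_of_orbitRel {ι M : Type} [Group M] {H : Subgroup (Equiv.Perm ι)}
    {a : ι → M} (ha : ∀ h : H, permHom ι M h a = a) {i j : ι} (hij : orbitRel H ι i j) :
    a i = a j := by
  obtain ⟨h, rfl⟩ := hij
  have := congrFun (ha h⁻¹) j
  rw [permHom_apply] at this
  simpa [Subgroup.smul_def] using this

noncomputable def centerPermSemidirectEquiv (ι M : Type) [CommGroup M] [Nontrivial M]
    (H : Subgroup (Equiv.Perm ι)) :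
    Subgroup.center ((ι → M) ⋊[(permHom ι M).comp H.subtype] H) ≃*
      (orbitRel.Quotient H ι → M) :=
  have hφ : Function.Injective ((permHom ι M).comp H.subtype) :=
    (permHom_injective ι M).comp H.subtype_injective
  { toFun := fun z ω ↦ z.1.left ω.out
    invFun := fun b ↦ ⟨⟨fun i ↦ b (Quotient.mk'' i), 1⟩,
      (SemidirectProduct.mem_center_iff hφ).mpr ⟨rfl, fun h ↦ funext fun i ↦
        congrArg b (Quotient.sound' ⟨h⁻¹, rfl⟩)⟩⟩
    left_inv := fun z ↦ by
      obtain ⟨hright, hleft⟩ := (SemidirectProduct.mem_center_iff hφ).mp z.2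
      refine Subtype.ext (SemidirectProduct.ext (funext fun i ↦ ?_) hright.symm)
      exact permHom_apply_eq_of_orbitRel hleft (Quotient.exact' (Quotient.out_eq' _))
    right_inv := fun b ↦ funext fun ω ↦ congrArg b (Quotient.out_eq' ω)
    map_mul' := fun z w ↦ by
      obtain ⟨hright, -⟩ := (SemidirectProduct.mem_center_iff hφ).mp z.2
      funext ω
      simp [hright] }

open scoped Nat

theorem List.sum_range_getD_eq_sum {M : Type*} [AddCommMonoid M] (L : List M) :
    ∑ i ∈ Finset.range L.length, L.getD i 0 = L.sum := by
  rw [Finset.sum_range, ← Fin.sum_univ_getElem]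
  exact Finset.sum_congr rfl fun i _ ↦ List.getD_eq_getElem _ _ i.2

theorem Nat.div_pow_sub_mul_div_pow_succ (b n k : ℕ) :
    n / b ^ k - b * (n / b ^ (k + 1)) = n / b ^ k % b := by
  rw [Nat.mod_eq_sub_mul_div, pow_succ, ← Nat.div_div_eq_div_mul]

theorem Nat.sum_div_pow_sub_mul_div_pow_succ_eq_digits_sum {b : ℕ} (hb : 2 ≤ b) (n : ℕ) :
    ∑ k ∈ Finset.range (Nat.log b n + 1), (n / b ^ k - b * (n / b ^ (k + 1))) =
      (b.digits n).sum := by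
  rcases Nat.eq_zero_or_pos n with rfl | hn
  · simp
  rw [← Nat.length_digits b n hb hn.ne', ← List.sum_range_getD_eq_sum]
  refine Finset.sum_congr rfl fun k _ ↦ ?_
  rw [Nat.div_pow_sub_mul_div_pow_succ, Nat.getD_digits n k hb]

theorem sub_one_mul_padicValNat_factorial_pow_add_one {p : ℕ} [hp : Fact p.Prime] (e : ℕ) :
    (p - 1) * padicValNat p (p ^ e)! + 1 = p ^ e := by
  have hdigits : p.digits (p ^ e) = List.replicate e 0 ++ [1] := by
    simpa [Nat.digits_of_lt p 1 one_ne_zero hp.out.one_lt] using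
      Nat.digits_base_pow_mul (k := e) hp.out.one_lt Nat.one_pos
  have := Nat.one_le_pow e p hp.out.pos
  rw [sub_one_mul_padicValNat_factorial, hdigits, List.sum_append, List.sum_replicate]
  simp only [smul_eq_mul, mul_zero, List.sum_singleton, zero_add]
  omega

theorem MulAction.sum_card_orbitRel_quotient_orbit (G α : Type*) [Group G] [MulAction G α]
    [Fintype (orbitRel.Quotient G α)] [Finite α] :
    ∑ ω : orbitRel.Quotient G α, Nat.card ω.orbit = Nat.card α := by
  rw [Nat.card_congr (selfEquivSigmaOrbits' G α), Nat.card_sigma]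

theorem MulAction.card_dvd_prod_factorial_card_orbit (G α : Type*) [Group G] [MulAction G α]
    [FaithfulSMul G α] [Fintype (orbitRel.Quotient G α)] [Finite α] :
    Nat.card G ∣ ∏ ω : orbitRel.Quotient G α, (Nat.card ω.orbit)! := by
  have hinj : Function.Injective (MonoidHom.pi fun ω : orbitRel.Quotient G α ↦
      toPermHom G ω.orbit) := by
    intro g h hgh
    refine eq_of_smul_eq_smul (α := α) fun x ↦ ?_
    have hx : x ∈ orbitRel.Quotient.orbit (Quotient.mk'' x : orbitRel.Quotient G α) :=
      orbitRel.Quotient.mem_orbit.mpr rfl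
    exact congrArg Subtype.val (Equiv.ext_iff.mp (congrFun hgh _) ⟨x, hx⟩)
  refine (Subgroup.card_dvd_of_injective _ hinj).trans (dvd_of_eq ?_)
  simp only [Nat.card_pi, Nat.card_perm]

theorem Sylow.padicValNat_factorial_card_eq_sum_orbit {p : ℕ} [hp : Fact p.Prime] {α : Type*}
    [Finite α] (P : Sylow p (Equiv.Perm α)) [Fintype (orbitRel.Quotient P α)] :
    padicValNat p (Nat.card α)! =
      ∑ ω : orbitRel.Quotient P α, padicValNat p (Nat.card ω.orbit)! := by
  have hfac (ω : orbitRel.Quotient P α) : (Nat.card ω.orbit)! ≠ 0 := Nat.factorial_ne_zero _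
  have hprod : ∏ ω : orbitRel.Quotient P α, (Nat.card ω.orbit)! ≠ 0 :=
    Finset.prod_ne_zero_iff.mpr fun ω _ ↦ hfac ω
  have hcardP : Nat.card P = p ^ padicValNat p (Nat.card α)! := by
    rw [P.card_eq_multiplicity, Nat.card_perm, Nat.factorization_def _ hp.out]
  simp only [← Nat.factorization_def _ hp.out]
  rw [← Finset.sum_apply', ← Nat.factorization_prod fun ω _ ↦ hfac ω]
  apply le_antisymm
  · rw [← hp.out.pow_dvd_iff_le_factorization hprod, Nat.factorization_def _ hp.out, ← hcardP]
    exact card_dvd_prod_factorial_card_orbit P α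
  · refine (Nat.factorization_le_iff_dvd hprod (Nat.factorial_ne_zero _)).mpr ?_ p
    simpa only [sum_card_orbitRel_quotient_orbit] using
      Nat.prod_factorial_dvd_factorial_sum Finset.univ fun ω : orbitRel.Quotient P α ↦
        Nat.card ω.orbit

theorem Sylow.card_orbitRel_quotient_eq_digits_sum {p : ℕ} [hp : Fact p.Prime] {α : Type*}
    [Finite α] (P : Sylow p (Equiv.Perm α)) :
    Nat.card (orbitRel.Quotient P α) = (p.digits (Nat.card α)).sum := by
  have : Fintype (orbitRel.Quotient P α) := Fintype.ofFinite _
  have hcard_orbit (ω : orbitRel.Quotient P α) :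
      (p - 1) * padicValNat p (Nat.card ω.orbit)! + 1 = Nat.card ω.orbit := by
    induction ω using Quotient.inductionOn' with | h x => ?_
    obtain ⟨e, he⟩ := P.isPGroup'.card_orbit x
    rw [orbitRel.Quotient.orbit_mk, he, sub_one_mul_padicValNat_factorial_pow_add_one]
  have hsum : (p - 1) * padicValNat p (Nat.card α)! + Nat.card (orbitRel.Quotient P α) =
      Nat.card α := by
    rw [P.padicValNat_factorial_card_eq_sum_orbit, Finset.mul_sum, Nat.card_eq_fintype_card,
      ← Finset.card_univ, Finset.card_eq_sum_ones, ← Finset.sum_add_distrib]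
    simp only [hcard_orbit, sum_card_orbitRel_quotient_orbit]
  have := sub_one_mul_padicValNat_factorial (p := p) (Nat.card α)
  have := Nat.digit_sum_le p (Nat.card α)
  omega

theorem center_of_wreath_sylow_general (l s n₀ : ℕ) (hl : l.Prime) (hs : 0 < s)
    (P' : Sylow l (Equiv.Perm (Fin n₀))) :
    Nonempty
      ((Subgroup.center ((Fin n₀ → Multiplicative (ZMod (l ^ s)))
          ⋊[(permHom (Fin n₀) (Multiplicative (ZMod (l ^ s)))).comp
              (P' : Subgroup (Equiv.Perm (Fin n₀))).subtype] P'))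
        ≃* (Fin (∑ k ∈ Finset.range (Nat.log l n₀ + 1), (n₀ / l ^ k - l * (n₀ / l ^ (k + 1))))
            → Multiplicative (ZMod (l ^ s)))) := by
  have : Fact l.Prime := ⟨hl⟩
  have : Fact (1 < l ^ s) := ⟨Nat.one_lt_pow hs.ne' hl.one_lt⟩
  have hcard : Nat.card (orbitRel.Quotient P' (Fin n₀)) =
      ∑ k ∈ Finset.range (Nat.log l n₀ + 1), (n₀ / l ^ k - l * (n₀ / l ^ (k + 1))) := by
    rw [P'.card_orbitRel_quotient_eq_digits_sum, Nat.card_fin,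
      Nat.sum_div_pow_sub_mul_div_pow_succ_eq_digits_sum hl.two_le]
  exact ⟨(centerPermSemidirectEquiv _ _ _).trans
    (MulEquiv.arrowCongr (Finite.equivFinOfCardEq hcard) (MulEquiv.refl _))⟩

/-- The center of `P = (ℤ/l^sℤ)^{n₀} ⋊ P_l(S_{n₀})`, where a Sylow `l`-subgroup of
`S_{n₀}` acts by permuting coordinates, is isomorphic to `(ℤ/l^sℤ)^r` with
`r = Σ_{k=0}^{μ_l(n₀)} (⌊n₀/l^k⌋ − l⌊n₀/l^{k+1}⌋)`, `μ_l(n₀)` being the largest `d`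
with `l^d ≤ n₀`. -/
theorem center_of_wreath_sylow (l s n₀ : ℕ) (hl : l.Prime) (hs : 0 < s) (hn : 0 < n₀)
    (P' : Sylow l (Equiv.Perm (Fin n₀))) :
    Nonempty
      ((Subgroup.center ((Fin n₀ → Multiplicative (ZMod (l ^ s)))
          ⋊[(permHom (Fin n₀) (Multiplicative (ZMod (l ^ s)))).comp
              (P' : Subgroup (Equiv.Perm (Fin n₀))).subtype] P'))
        ≃* (Fin (∑ k ∈ Finset.range (Nat.log l n₀ + 1), (n₀ / l ^ k - l * (n₀ / l ^ (k + 1))))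
            → Multiplicative (ZMod (l ^ s)))) :=
  center_of_wreath_sylow_general l s n₀ hl hs P'
end

section
/- Let l be a prime, q a prime power with l ∤ q, d the smallest positive integer with l | q^d − 1, s = ν_l(q^d − 1), and n₀ = ⌊n/d⌋. If l is odd, then the l-part of |GL_n(𝔽_q)| equals l^{s·n₀} times the l-part of n₀!. -/
open Finset

private lemma padicValNat_factorial_sum (l : ℕ) [Fact l.Prime] (m : ℕ) :
    padicValNat l (Nat.factorial m) = ∑ k ∈ Icc 1 m, padicValNat l k := by
  induction m with
  | zero => simp
  | succ m ih =>
    rw [Nat.factorial_succ, padicValNat.mul (Nat.succ_ne_zero m) (Nat.factorial_ne_zero m),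
      ih, Finset.sum_Icc_succ_top (by omega), add_comm]

/-- For an odd prime `l` not dividing the prime power `q`, with `d` the multiplicative order
condition (`d` smallest positive with `l ∣ q^d − 1`), `s = ν_l(q^d − 1)` and `n₀ = ⌊n/d⌋`,
the `l`-part of `|GL_n(𝔽_q)|` is `l^{s·n₀}` times the `l`-part of `n₀!`. -/
theorem lpart_card_GL (l p r q n d : ℕ) (hl : l.Prime) (hlodd : l ≠ 2)
    (hp : p.Prime) (hr : 0 < r) (hq : q = p ^ r) (hlq : ¬ l ∣ q)
    (F : Type) [Field F] [Fintype F] (hF : Fintype.card F = q)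
    (hd : 0 < d) (hdl : l ∣ q ^ d - 1)
    (hdmin : ∀ e, 0 < e → l ∣ q ^ e - 1 → d ≤ e) :
    l ^ padicValNat l (Nat.card (GL (Fin n) F)) =
      l ^ (padicValNat l (q ^ d - 1) * (n / d)) *
        l ^ padicValNat l (Nat.factorial (n / d)) := by
  haveI : Fact l.Prime := ⟨hl⟩
  have hlo : Odd l := hl.odd_of_ne_two hlodd
  have hq2 : 2 ≤ q := by
    rw [hq]; calc 2 ≤ p := hp.two_le
    _ ≤ p ^ r := Nat.le_self_pow hr.ne' p
  have hqpos : 0 < q := by omega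
  -- translation between divisibility and powers in ZMod l
  have key : ∀ e : ℕ, l ∣ q ^ e - 1 ↔ (q : ZMod l) ^ e = 1 := by
    intro e
    rw [← ZMod.natCast_eq_zero_iff,
      Nat.cast_sub (Nat.one_le_pow e q hqpos), Nat.cast_pow, Nat.cast_one, sub_eq_zero]
  have hfin : IsOfFinOrder (q : ZMod l) :=
    isOfFinOrder_iff_pow_eq_one.mpr ⟨d, hd, (key d).mp hdl⟩
  have ho : orderOf (q : ZMod l) = d := by
    refine le_antisymm (orderOf_le_of_pow_eq_one hd ((key d).mp hdl)) ?_
    exact hdmin _ hfin.orderOf_pos ((key _).mpr (pow_orderOf_eq_one _))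
  have hdvd : ∀ e : ℕ, l ∣ q ^ e - 1 ↔ d ∣ e := by
    intro e
    rw [key, ← ho, orderOf_dvd_iff_pow_eq_one]
  have hlqd : ¬ l ∣ q ^ d := fun h => hlq (hl.dvd_of_dvd_pow h)
  have hqd1 : 1 < q ^ d := Nat.one_lt_pow hd.ne' (by omega)
  -- value at multiples of d
  have hval : ∀ k : ℕ, k ≠ 0 → padicValNat l (q ^ (d * k) - 1) =
      padicValNat l (q ^ d - 1) + padicValNat l k := by
    intro k hk
    have := padicValNat.pow_sub_pow (p := l) hlo (x := q ^ d) (y := 1) hqd1 hdl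
      (by simpa using hlqd) hk
    simpa [one_pow, pow_mul] using this
  have hzero : ∀ j : ℕ, ¬ d ∣ j → padicValNat l (q ^ j - 1) = 0 := fun j h =>
    padicValNat.eq_zero_of_not_dvd (fun hdj => h ((hdvd j).mp hdj))
  -- reduce to equality of exponents
  rw [← pow_add]
  congr 1
  -- compute the valuation of the cardinality
  have hcard : Nat.card (GL (Fin n) F) = ∏ i : Fin n, (q ^ n - q ^ (i : ℕ)) := by
    rw [Matrix.card_GL_field, hF]
  have hfac : ∀ i : Fin n, q ^ n - q ^ (i : ℕ) = q ^ (i : ℕ) * (q ^ (n - (i : ℕ)) - 1) := by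
    intro i
    rw [Nat.mul_sub, mul_one, ← pow_add, Nat.add_sub_cancel' (le_of_lt i.2)]
  have hterm : ∀ i : Fin n, padicValNat l (q ^ n - q ^ (i : ℕ)) =
      padicValNat l (q ^ (n - (i : ℕ)) - 1) := by
    intro i
    rw [hfac i, padicValNat.mul (by positivity)
      (by have := Nat.one_lt_pow (by omega : n - (i:ℕ) ≠ 0) (by omega : 1 < q); omega),
      padicValNat.eq_zero_of_not_dvd (fun h => hlq (hl.dvd_of_dvd_pow h)), zero_add]
  have hprodval : padicValNat l (Nat.card (GL (Fin n) F)) =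
      ∑ i : Fin n, padicValNat l (q ^ (n - (i : ℕ)) - 1) := by
    rw [hcard]
    have hne : ∀ i ∈ (univ : Finset (Fin n)), q ^ n - q ^ (i : ℕ) ≠ 0 := by
      intro i _
      have : q ^ (i : ℕ) < q ^ n := Nat.pow_lt_pow_right (by omega) i.2
      omega
    have := Nat.factorization_prod (S := (univ : Finset (Fin n)))
      (g := fun i : Fin n => q ^ n - q ^ (i : ℕ)) hne
    have h2 := congrArg (fun f : ℕ →₀ ℕ => f l) this
    simp only [Finsupp.finset_sum_apply] at h2
    rw [← Nat.factorization_def _ hl, h2]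
    exact Finset.sum_congr rfl fun i _ => by
      rw [Nat.factorization_def _ hl, hterm i]
  rw [hprodval]
  -- reindex the sum to Icc 1 n
  have hsum1 : ∑ i : Fin n, padicValNat l (q ^ (n - (i : ℕ)) - 1) =
      ∑ j ∈ Icc 1 n, padicValNat l (q ^ j - 1) := by
    rw [Fin.sum_univ_eq_sum_range (fun i => padicValNat l (q ^ (n - i) - 1)),
      show Icc 1 n = Ico 1 (n + 1) by rfl, Finset.sum_Ico_eq_sum_range]
    simp only [Nat.add_sub_cancel]
    rw [← Finset.sum_range_reflect (fun j => padicValNat l (q ^ (1 + j) - 1)) n]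
    refine Finset.sum_congr rfl fun i hi => ?_
    rw [Finset.mem_range] at hi
    rw [show 1 + (n - 1 - i) = n - i by omega]
  rw [hsum1]
  -- split according to divisibility by d
  have hsum2 : ∑ j ∈ Icc 1 n, padicValNat l (q ^ j - 1) =
      ∑ j ∈ (Icc 1 n).filter (d ∣ ·),
        (padicValNat l (q ^ d - 1) + padicValNat l (j / d)) := by
    rw [Finset.sum_filter]
    refine Finset.sum_congr rfl fun j hj => ?_
    rw [Finset.mem_Icc] at hj
    by_cases h : d ∣ j
    · rw [if_pos h]
      have hjd : j = d * (j / d) := (Nat.mul_div_cancel' h).symm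
      have : j / d ≠ 0 := by
        intro h0
        rw [h0, Nat.mul_zero] at hjd; omega
      rw [show q ^ j = q ^ (d * (j / d)) by rw [← hjd]]
      exact hval _ this
    · rw [if_neg h]; exact hzero j h
  rw [hsum2]
  -- reindex to Icc 1 (n/d)
  have hsum3 : ∑ j ∈ (Icc 1 n).filter (d ∣ ·),
        (padicValNat l (q ^ d - 1) + padicValNat l (j / d)) =
      ∑ k ∈ Icc 1 (n / d), (padicValNat l (q ^ d - 1) + padicValNat l k) := by
    refine Finset.sum_bij' (fun j _ => j / d) (fun k _ => d * k) ?_ ?_ ?_ ?_ ?_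
    · intro j hj
      simp only [Finset.mem_filter, Finset.mem_Icc] at hj
      obtain ⟨⟨h1, h2⟩, h3⟩ := hj
      rw [Finset.mem_Icc]
      constructor
      · exact Nat.one_le_div_iff hd |>.mpr (Nat.le_of_dvd (by omega) h3)
      · exact Nat.div_le_div_right h2
    · intro k hk
      rw [Finset.mem_Icc] at hk
      simp only [Finset.mem_filter, Finset.mem_Icc]
      refine ⟨⟨by nlinarith [hk.1, hd], ?_⟩, Dvd.intro k rfl⟩
      calc d * k ≤ d * (n / d) := Nat.mul_le_mul_left d hk.2
      _ ≤ n := Nat.mul_div_le n d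
    · intro j hj
      simp only [Finset.mem_filter] at hj
      exact Nat.mul_div_cancel' hj.2
    · intro k _
      exact Nat.mul_div_cancel_left k hd
    · intro j _
      rfl
  rw [hsum3, Finset.sum_add_distrib, Finset.sum_const, Nat.card_Icc, smul_eq_mul,
    padicValNat_factorial_sum l (n / d)]
  congr 1
  · rw [Nat.add_sub_cancel, mul_comm]
end

section
/- Let l be an odd prime, q a prime power with l ∤ q, d the smallest positive integer with l | q^d − 1, s = ν_l(q^d − 1), and n₀ = ⌊n/d⌋. Then GL_n(𝔽_q) has a Sylow l-subgroup isomorphic to the semidirect product (ℤ/l^sℤ)^{n₀} ⋊ P_l(S_{n₀}), where P_l(S_{n₀}) is a Sylow l-subgroup of S_{n₀} acting by permuting coordinates. -/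
/-!
Since `q` has order `d` modulo `l`, the factor `q^j - 1` of
`|GL_n(𝔽_q)| = q^(n(n-1)/2) ∏_{j ≤ n} (q^j - 1)` is divisible by `l` only when `d ∣ j`, and lifting
the exponent gives `ν_l(q^(dm) - 1) = s + ν_l(m)` for odd `l`. Hence
`ν_l |GL_n(𝔽_q)| = n₀ s + ν_l(n₀!)`.

A primitive `l^s`-th root of unity `ζ ∈ 𝔽_{q^d}` acts `𝔽_q`-linearly on `𝔽_{q^d} ≅ 𝔽_q^d` by
multiplication. Letting `(ℤ/l^s)^{n₀}` act through `ζ` on the `n₀` blocks of `𝔽_q^{n₀ d} ⊆ 𝔽_q^n`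
and `P_l(S_{n₀})` permute the blocks gives a faithful representation of the semidirect product,
whose order `l^(n₀ s) · l^(ν_l(n₀!))` is the full `l`-part of `|GL_n(𝔽_q)|`.
-/

open Finset Module

section Valuation

variable {l q d : ℕ}

lemma dvd_pow_sub_one_iff_natCast_pow_eq_one (hq : q ≠ 0) (e : ℕ) :
    l ∣ q ^ e - 1 ↔ (q : ZMod l) ^ e = 1 := by
  rw [← ZMod.natCast_eq_zero_iff, Nat.cast_sub (Nat.one_le_pow _ _ (Nat.pos_of_ne_zero hq)),
    sub_eq_zero, Nat.cast_pow, Nat.cast_one]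

lemma orderOf_natCast_eq_of_minimal (hq : q ≠ 0) (hd : 0 < d) (hdl : l ∣ q ^ d - 1)
    (hdmin : ∀ e, 0 < e → l ∣ q ^ e - 1 → d ≤ e) : orderOf (q : ZMod l) = d := by
  rw [dvd_pow_sub_one_iff_natCast_pow_eq_one hq] at hdl
  have hpos : 0 < orderOf (q : ZMod l) :=
    orderOf_pos_iff.2 (isOfFinOrder_iff_pow_eq_one.2 ⟨d, hd, hdl⟩)
  refine le_antisymm (Nat.le_of_dvd hd (orderOf_dvd_of_pow_eq_one hdl)) (hdmin _ hpos ?_)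
  exact (dvd_pow_sub_one_iff_natCast_pow_eq_one hq _).2 (pow_orderOf_eq_one _)

lemma dvd_pow_sub_one_iff_dvd (hq : q ≠ 0) (hd : 0 < d) (hdl : l ∣ q ^ d - 1)
    (hdmin : ∀ e, 0 < e → l ∣ q ^ e - 1 → d ≤ e) (e : ℕ) : l ∣ q ^ e - 1 ↔ d ∣ e := by
  rw [dvd_pow_sub_one_iff_natCast_pow_eq_one hq, ← orderOf_natCast_eq_of_minimal hq hd hdl hdmin,
    orderOf_dvd_iff_pow_eq_one]

lemma padicValNat_pow_mul_sub_one (hl : l.Prime) (hlodd : l ≠ 2) (hlq : ¬ l ∣ q) (hq : 1 < q)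
    (hd : 0 < d) (hdl : l ∣ q ^ d - 1) {m : ℕ} (hm : m ≠ 0) :
    padicValNat l (q ^ (d * m) - 1) = padicValNat l (q ^ d - 1) + padicValNat l m := by
  have := Fact.mk hl
  simpa [pow_mul] using padicValNat.pow_sub_pow (y := 1) (hl.odd_of_ne_two hlodd)
    (Nat.one_lt_pow hd.ne' hq) (by simpa using hdl) (fun h => hlq (hl.dvd_of_dvd_pow h)) hm

lemma sum_factorization_pow_sub_one (hl : l.Prime) (hlodd : l ≠ 2) (hlq : ¬ l ∣ q) (hq : 1 < q)
    (hd : 0 < d) (hdl : l ∣ q ^ d - 1) (hdmin : ∀ e, 0 < e → l ∣ q ^ e - 1 → d ≤ e) (n : ℕ) :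
    ∑ j ∈ range n, (q ^ (j + 1) - 1).factorization l
      = n / d * padicValNat l (q ^ d - 1) + (n / d).factorial.factorization l := by
  induction n with
  | zero => simp
  | succ n ih =>
    rw [sum_range_succ, ih, Nat.succ_div]
    split_ifs with hdn
    · obtain ⟨k, hk⟩ := hdn
      obtain ⟨m, rfl⟩ := Nat.exists_eq_add_one_of_ne_zero (by rintro rfl; simp at hk : k ≠ 0)
      have hnm : n / d = m := by
        have := Nat.succ_div (a := n) (b := d)
        rw [if_pos ⟨_, hk⟩, hk, Nat.mul_div_cancel_left _ hd] at this
        omega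
      rw [hk, hnm, Nat.factorial_succ, Nat.factorization_mul (Nat.succ_ne_zero _)
          (Nat.factorial_ne_zero _), Finsupp.add_apply]
      simp only [Nat.factorization_def _ hl]
      rw [padicValNat_pow_mul_sub_one hl hlodd hlq hq hd hdl (Nat.succ_ne_zero m)]
      ring
    · rw [Nat.factorization_eq_zero_of_not_dvd (n := q ^ (n + 1) - 1)
        (by rwa [dvd_pow_sub_one_iff_dvd (by omega) hd hdl hdmin]), add_zero, add_zero]

lemma factorization_pow_sub_pow (hl : l.Prime) (hlq : ¬ l ∣ q) {i n : ℕ} (hi : i ≤ n) :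
    (q ^ n - q ^ i).factorization l = (q ^ (n - i) - 1).factorization l := by
  have hq : q ≠ 0 := by rintro rfl; exact hlq (dvd_zero l)
  rcases eq_or_ne (q ^ (n - i) - 1) 0 with h | h
  · rw [h, ← Nat.add_sub_cancel' hi, pow_add, ← Nat.mul_sub_one, h, mul_zero]
  rw [← Nat.add_sub_cancel' hi, pow_add, ← Nat.mul_sub_one, Nat.add_sub_cancel_left,
    Nat.factorization_mul (pow_ne_zero _ hq) h, Finsupp.add_apply,
    Nat.factorization_eq_zero_of_not_dvd (fun h => hlq (hl.dvd_of_dvd_pow h)), zero_add]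

lemma factorization_card_GL (hl : l.Prime) (hlodd : l ≠ 2) (hlq : ¬ l ∣ q)
    (F : Type*) [Field F] [Fintype F] (hF : Fintype.card F = q)
    (hd : 0 < d) (hdl : l ∣ q ^ d - 1) (hdmin : ∀ e, 0 < e → l ∣ q ^ e - 1 → d ≤ e) (n : ℕ) :
    (Nat.card (GL (Fin n) F)).factorization l
      = n / d * padicValNat l (q ^ d - 1) + (n / d).factorial.factorization l := by
  have hq : 1 < q := hF ▸ Fintype.one_lt_card
  rw [Matrix.card_GL_field, hF, Fin.prod_univ_eq_prod_range (fun i => q ^ n - q ^ i),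
    Nat.factorization_prod fun i hi => Nat.sub_ne_zero_of_lt
      (Nat.pow_lt_pow_right hq (mem_range.1 hi)), Finsupp.finsetSum_apply,
    ← sum_factorization_pow_sub_one hl hlodd hlq hq hd hdl hdmin, ← sum_range_reflect]
  refine sum_congr rfl fun i hi => ?_
  have hi := mem_range.1 hi
  rw [factorization_pow_sub_pow hl hlq (by omega), show n - (n - 1 - i) = i + 1 by omega]

end Valuation

section Wreath

variable {R W : Type*} [Semiring R] [AddCommMonoid W] [Module R W] {ι M : Type} [Group M]

def piRep (ρ : M →* (W ≃ₗ[R] W)) : (ι → M) →* ((ι → W) ≃ₗ[R] (ι → W)) where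
  toFun a := LinearEquiv.piCongrRight fun i => ρ (a i)
  map_one' := LinearEquiv.ext fun v => funext fun i => by simp
  map_mul' a b := LinearEquiv.ext fun v => funext fun i => by simp

variable (R W) in
def permRep : Equiv.Perm ι →* ((ι → W) ≃ₗ[R] (ι → W)) where
  toFun σ := LinearEquiv.piCongrLeft' R (fun _ => W) σ
  map_one' := rfl
  map_mul' _ _ := LinearEquiv.ext fun _ => rfl

def wreathRep (ρ : M →* (W ≃ₗ[R] W)) (H : Subgroup (Equiv.Perm ι)) :
    (ι → M) ⋊[(permHom ι M).comp H.subtype] H →* ((ι → W) ≃ₗ[R] (ι → W)) :=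
  SemidirectProduct.lift (piRep ρ) ((permRep R W).comp H.subtype) fun σ => by
    ext a : 1
    show _ = MulAut.conj _ _
    rw [MulAut.conj_apply, eq_mul_inv_iff_mul_eq]
    exact LinearEquiv.ext fun v => rfl

lemma wreathRep_apply (ρ : M →* (W ≃ₗ[R] W)) (H : Subgroup (Equiv.Perm ι))
    (g : (ι → M) ⋊[(permHom ι M).comp H.subtype] H) (v : ι → W) (i : ι) :
    wreathRep ρ H g v i = ρ (g.left i) (v ((g.right : Equiv.Perm ι).symm i)) :=
  rfl

lemma wreathRep_injective [DecidableEq ι] [Nontrivial W] {ρ : M →* (W ≃ₗ[R] W)}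
    (hρ : Function.Injective ρ) (H : Subgroup (Equiv.Perm ι)) :
    Function.Injective (wreathRep ρ H) := by
  refine (injective_iff_map_eq_one _).2 fun g hg => ?_
  have hfix (v : ι → W) (i : ι) : ρ (g.left i) (v ((g.right : Equiv.Perm ι).symm i)) = v i := by
    rw [← wreathRep_apply, hg]
    rfl
  obtain ⟨w, hw⟩ := exists_ne (0 : W)
  have hright : g.right = 1 := by
    refine Subtype.ext (Equiv.ext fun j => by_contra fun hne => ?_)
    replace hne : (g.right : Equiv.Perm ι) j ≠ j := hne
    have := hfix (Pi.single j w) ((g.right : Equiv.Perm ι) j)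
    rw [Equiv.symm_apply_apply, Pi.single_eq_same, Pi.single_eq_of_ne hne,
      LinearEquiv.map_eq_zero_iff] at this
    exact hw this
  have hleft : g.left = 1 := by
    funext i
    apply hρ
    ext w
    simpa [hright] using hfix (fun _ => w) i
  exact SemidirectProduct.ext hleft hright

end Wreath

lemma exists_injective_monoidHom_GL_of_finrank_le {F V : Type*} [Field F] [AddCommGroup V]
    [Module F V] [FiniteDimensional F V] {n : ℕ} (h : finrank F V ≤ n) :
    ∃ φ : (V ≃ₗ[F] V) →* GL (Fin n) F, Function.Injective φ := by
  let V' := V × (Fin (n - finrank F V) → F)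
  let e : V' ≃ₗ[F] (Fin n → F) := LinearEquiv.ofFinrankEq _ _ (by simp [V']; omega)
  let extendByOne : (V ≃ₗ[F] V) →* (V' ≃ₗ[F] V') :=
    { toFun f := f.prodCongr (.refl F _)
      map_one' := rfl
      map_mul' _ _ := rfl }
  have hextend : Function.Injective extendByOne := fun f g hfg =>
    LinearEquiv.ext fun v => congr(($hfg (v, 0)).1)
  exact ⟨Matrix.GeneralLinearGroup.toLin.symm.toMonoidHom.comp <|
      (LinearMap.GeneralLinearGroup.congrLinearEquiv e).toMonoidHom.comp <|
      (LinearMap.GeneralLinearGroup.generalLinearEquiv F V').symm.toMonoidHom.comp extendByOne,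
    Matrix.GeneralLinearGroup.toLin.symm.injective.comp <|
      (LinearMap.GeneralLinearGroup.congrLinearEquiv e).injective.comp <|
      (LinearMap.GeneralLinearGroup.generalLinearEquiv F V').symm.injective.comp hextend⟩

lemma exists_isPrimitiveRoot_pow_padicValNat (K : Type*) [Field K] [Finite K] {l : ℕ}
    (hl : l.Prime) : ∃ ζ : Kˣ, IsPrimitiveRoot ζ (l ^ padicValNat l (Nat.card K - 1)) := by
  obtain ⟨ζ, hζ⟩ := hl.exists_orderOf_eq_pow_factorization_exponent Kˣ
  rw [IsCyclic.exponent_eq_card, Nat.card_units, Nat.factorization_def _ hl] at hζ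
  exact ⟨ζ, hζ ▸ IsPrimitiveRoot.orderOf ζ⟩

lemma IsPrimitiveRoot.exists_injective_monoidHom {K : Type*} [CommRing K] {ζ : Kˣ} {m : ℕ}
    (hζ : IsPrimitiveRoot ζ m) : ∃ f : Multiplicative (ZMod m) →* Kˣ, Function.Injective f :=
  ⟨(Subgroup.zpowers ζ).subtype.comp hζ.zmodEquivZPowers.toMultiplicativeLeft.toMonoidHom,
    Subtype.val_injective.comp hζ.zmodEquivZPowers.toMultiplicativeLeft.injective⟩

lemma exists_injective_wreath_GL {F K : Type*} [Field F] [Field K] [Algebra F K]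
    [FiniteDimensional F K] {ι : Type} [Fintype ι] {m n : ℕ} {ζ : Kˣ}
    (hζ : IsPrimitiveRoot ζ m) (hn : Fintype.card ι * finrank F K ≤ n)
    (H : Subgroup (Equiv.Perm ι)) :
    ∃ ψ : (ι → Multiplicative (ZMod m)) ⋊[(permHom ι _).comp H.subtype] H →* GL (Fin n) F,
      Function.Injective ψ := by
  classical
  obtain ⟨χ, hχ⟩ := hζ.exists_injective_monoidHom
  let ρ : Multiplicative (ZMod m) →* (K ≃ₗ[F] K) := (DistribMulAction.toModuleAut F K).comp χ
  have hρ : Function.Injective ρ := fun a b hab =>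
    hχ (Units.ext (by simpa [ρ, Units.smul_def] using congr($hab 1)))
  obtain ⟨φ, hφ⟩ := exists_injective_monoidHom_GL_of_finrank_le (V := ι → K) (F := F)
    (by simpa [Module.finrank_pi_fintype] using hn)
  exact ⟨φ.comp (wreathRep ρ H), hφ.comp (wreathRep_injective hρ H)⟩

theorem sylow_GL_general (l q n d : ℕ) (hl : l.Prime) (hlodd : l ≠ 2)
    (hlq : ¬ l ∣ q)
    (F : Type) [Field F] [Fintype F] (hF : Fintype.card F = q)
    (hd : 0 < d) (hdl : l ∣ q ^ d - 1)
    (hdmin : ∀ e, 0 < e → l ∣ q ^ e - 1 → d ≤ e)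
    (P' : Sylow l (Equiv.Perm (Fin (n / d)))) :
    ∃ Q : Sylow l (GL (Fin n) F),
      Nonempty (((Fin (n / d) → Multiplicative (ZMod (l ^ padicValNat l (q ^ d - 1))))
          ⋊[(permHom (Fin (n / d)) (Multiplicative (ZMod (l ^ padicValNat l (q ^ d - 1))))).comp
              (P' : Subgroup (Equiv.Perm (Fin (n / d)))).subtype] P')
        ≃* (Q : Subgroup (GL (Fin n) F))) := by
  have := Fact.mk hl
  have := Fact.mk (CharP.char_is_prime F (ringChar F))
  have := NeZero.of_pos hd
  let K := FiniteField.Extension F (ringChar F) d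
  obtain ⟨ζ, hζ⟩ := exists_isPrimitiveRoot_pow_padicValNat K hl
  rw [FiniteField.natCard_extension, Nat.card_eq_fintype_card, hF] at hζ
  obtain ⟨ψ, hψ⟩ := exists_injective_wreath_GL (n := n) hζ
    (by rw [FiniteField.finrank_extension, Fintype.card_fin]; exact Nat.div_mul_le_self n d)
    (P' : Subgroup (Equiv.Perm (Fin (n / d))))
  have hcard : Nat.card ψ.range = l ^ (Nat.card (GL (Fin n) F)).factorization l := by
    rw [← Nat.card_congr (MonoidHom.ofInjective hψ).toEquiv, SemidirectProduct.card,
      Sylow.card_eq_multiplicity, Nat.card_perm, Nat.card_fun,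
      factorization_card_GL hl hlodd hlq F hF hd hdl hdmin n, Nat.card_congr Multiplicative.toAdd,
      Nat.card_zmod, Nat.card_fin, ← pow_mul, ← pow_add, mul_comm]
  exact ⟨Sylow.ofCard ψ.range hcard, ⟨MonoidHom.ofInjective hψ⟩⟩

/-- For an odd prime `l` with `l ∤ q`, `d` minimal positive with `l ∣ q^d − 1`,
`s = ν_l(q^d − 1)` and `n₀ = ⌊n/d⌋`, the group `GL_n(𝔽_q)` has a Sylow `l`-subgroup
isomorphic to `(ℤ/l^sℤ)^{n₀} ⋊ P_l(S_{n₀})`, a Sylow `l`-subgroup of `S_{n₀}` acting by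
permuting coordinates. -/
theorem sylow_GL (l p r q n d : ℕ) (hl : l.Prime) (hlodd : l ≠ 2)
    (hp : p.Prime) (hr : 0 < r) (hq : q = p ^ r) (hlq : ¬ l ∣ q)
    (F : Type) [Field F] [Fintype F] (hF : Fintype.card F = q)
    (hd : 0 < d) (hdl : l ∣ q ^ d - 1)
    (hdmin : ∀ e, 0 < e → l ∣ q ^ e - 1 → d ≤ e)
    (P' : Sylow l (Equiv.Perm (Fin (n / d)))) :
    ∃ Q : Sylow l (GL (Fin n) F),
      Nonempty (((Fin (n / d) → Multiplicative (ZMod (l ^ padicValNat l (q ^ d - 1))))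
          ⋊[(permHom (Fin (n / d)) (Multiplicative (ZMod (l ^ padicValNat l (q ^ d - 1))))).comp
              (P' : Subgroup (Equiv.Perm (Fin (n / d)))).subtype] P')
        ≃* (Q : Subgroup (GL (Fin n) F))) :=
  sylow_GL_general l q n d hl hlodd hlq F hF hd hdl hdmin P'
end

section
/- Let l be an odd prime, q a prime power with l ∤ q, and d the smallest positive integer with l | q^d − 1. If d is even, then the l-part of |Sp(2n, 𝔽_q)| equals the l-part of |GL_{2n}(𝔽_q)|, and consequently the Sylow l-subgroups of Sp(2n, 𝔽_q) are isomorphic to those of GL_{2n}(𝔽_q). -/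
open Matrix Function

section fiber
variable {V W : Type*} [AddCommGroup V] [AddCommGroup W] [Finite V] [Finite W]

lemma fiber_card (f : V →+ W) (hf : Surjective f) (b : W) :
    Nat.card {x : V // f x = b} * Nat.card W = Nat.card V := by
  obtain ⟨x0, hx0⟩ := hf b
  have e : {x : V // f x = b} ≃ f.ker := by
    refine ⟨fun x => ⟨x.1 - x0, ?_⟩, fun y => ⟨y.1 + x0, ?_⟩, fun x => by simp, fun y => by simp⟩
    · simp [AddMonoidHom.mem_ker, map_sub, x.2, hx0]
    · have := y.2
      rw [AddMonoidHom.mem_ker] at this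
      simp [map_add, this, hx0]
  rw [Nat.card_congr e]
  have h1 : Nat.card W = Nat.card (V ⧸ f.ker) :=
    Nat.card_congr (QuotientAddGroup.quotientKerEquivOfSurjective f hf).symm
  rw [h1, mul_comm]
  exact (AddSubgroup.card_eq_card_quotient_mul_card_addSubgroup f.ker).symm

end fiber

open Matrix Function Finset

section gram
variable {F V : Type*} [Field F] [AddCommGroup V] [Module F V]
variable {ι : Type*} [Fintype ι] [DecidableEq ι]
variable (B : V →ₗ[F] V →ₗ[F] F)

lemma gram_sum_eval (s : ι → V) (c : ι → F) (i : ι) :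
    B (s i) (∑ j, c j • s j) = ((Matrix.of fun i j => B (s i) (s j)) *ᵥ c) i := by
  simp only [map_sum, _root_.map_smul, smul_eq_mul, Matrix.mulVec, dotProduct,
    Matrix.of_apply]
  exact Finset.sum_congr rfl fun j _ => mul_comm _ _

lemma surj_of_gram (s : ι → V) (H : Matrix ι ι F)
    (hGH : (Matrix.of fun i j => B (s i) (s j)) * H = 1) :
    Surjective (fun x => (fun i => B (s i) x) : V → ι → F) := by
  intro t
  refine ⟨∑ j, (H *ᵥ t) j • s j, ?_⟩
  funext i
  simp only [gram_sum_eval B s, Matrix.mulVec_mulVec, hGH, Matrix.one_mulVec]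

lemma exists_perp_nonzero (hnd : ∀ x, (∀ y, B x y = 0) → x = 0)
    (s : ι → V) (H : Matrix ι ι F)
    (hGH : (Matrix.of fun i j => B (s i) (s j)) * H = 1)
    (u : V) (hu : u ≠ 0) (hperp : ∀ i, B (s i) u = 0) :
    ∃ y, (∀ i, B (s i) y = 0) ∧ B u y ≠ 0 := by
  by_contra hcon
  push_neg at hcon
  have hcon' : ∀ y, (∀ i, B (s i) y = 0) → B u y = 0 := fun y hy => by
    by_contra h; exact h (hcon y hy)
  set G : Matrix ι ι F := Matrix.of fun i j => B (s i) (s j) with hG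
  set xx : ι → V := fun k => ∑ j, H j k • s j with hxx
  have hdual : ∀ i k, B (s i) (xx k) = (1 : Matrix ι ι F) i k := by
    intro i k
    have : B (s i) (xx k) = (G *ᵥ fun j => H j k) i := gram_sum_eval B s _ i
    rw [this, ← hGH]
    simp [Matrix.mulVec, dotProduct, Matrix.mul_apply]
  set c : ι → F := fun k => B u (xx k) with hc
  have key : ∀ x, B u x = ∑ k, c k * B (s k) x := by
    intro x
    have hy : ∀ i, B (s i) (x - ∑ k, (B (s k) x) • xx k) = 0 := by
      intro i
      simp only [map_sub, map_sum, _root_.map_smul, smul_eq_mul, hdual]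
      rw [Finset.sum_eq_single i (fun b _ hb => by simp [Matrix.one_apply, Ne.symm hb])
        (fun h => absurd (Finset.mem_univ i) h)]
      simp [Matrix.one_apply]
    have h0 := hcon' _ hy
    rw [map_sub, sub_eq_zero, map_sum] at h0
    rw [h0]
    exact Finset.sum_congr rfl fun k _ => by
      rw [_root_.map_smul, smul_eq_mul, hc, mul_comm]
  have husum : u = ∑ k, c k • s k := by
    have hw : ∀ x, B (u - ∑ k, c k • s k) x = 0 := by
      intro x
      rw [map_sub, LinearMap.sub_apply, map_sum, LinearMap.sum_apply, key x, sub_eq_zero]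
      exact Finset.sum_congr rfl fun k _ => by
        rw [_root_.map_smul, LinearMap.smul_apply, smul_eq_mul]
    have := hnd _ hw
    rwa [sub_eq_zero] at this
  have hGc : G *ᵥ c = 0 := by
    funext i
    have h1 : B (s i) u = 0 := hperp i
    rw [husum, gram_sum_eval B s c i] at h1
    simpa using h1
  have hc0 : c = 0 := by
    have hHG : H * G = 1 := mul_eq_one_comm.mp hGH
    calc c = (H * G) *ᵥ c := by rw [hHG, Matrix.one_mulVec]
    _ = H *ᵥ (G *ᵥ c) := by rw [Matrix.mulVec_mulVec]
    _ = 0 := by rw [hGc, Matrix.mulVec_zero]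
  apply hu
  rw [husum, hc0]
  simp

lemma surj_ext (hnd : ∀ x, (∀ y, B x y = 0) → x = 0)
    (s : ι → V) (H : Matrix ι ι F)
    (hGH : (Matrix.of fun i j => B (s i) (s j)) * H = 1)
    (u : V) (hu : u ≠ 0) (hperp : ∀ i, B (s i) u = 0) :
    Surjective (fun x => ((fun i => B (s i) x), B u x) : V → (ι → F) × F) := by
  obtain ⟨y, hy1, hy2⟩ := exists_perp_nonzero B hnd s H hGH u hu hperp
  rintro ⟨t, a⟩
  obtain ⟨x0, hx0⟩ := surj_of_gram B s H hGH t
  simp only at hx0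
  refine ⟨x0 + ((a - B u x0) * (B u y)⁻¹) • y, ?_⟩
  have h1 : (fun i => B (s i) (x0 + ((a - B u x0) * (B u y)⁻¹) • y)) = t := by
    funext i
    have := congrFun hx0 i
    simp only [map_add, _root_.map_smul, smul_eq_mul, this, hy1 i, mul_zero, add_zero]
  have h2 : B u (x0 + ((a - B u x0) * (B u y)⁻¹) • y) = a := by
    rw [map_add, _root_.map_smul, smul_eq_mul, mul_assoc, inv_mul_cancel₀ hy2]
    ring
  simp only [h1, h2]

end gram
open Matrix Function Finset

section sp
variable (F : Type) [Field F] (n : ℕ)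

abbrev VV := (Fin n ⊕ Fin n) → F

noncomputable def Bsp : VV F n →ₗ[F] VV F n →ₗ[F] F :=
  Matrix.toLinearMap₂' F (Matrix.J (Fin n) F)

variable {F n}

lemma Bsp_apply (x y : VV F n) : Bsp F n x y = x ⬝ᵥ (Matrix.J (Fin n) F *ᵥ y) :=
  Matrix.toLinearMap₂'_apply' _ _ _

lemma Bsp_skew (x y : VV F n) : Bsp F n x y = - Bsp F n y x := by
  rw [Bsp_apply, Bsp_apply, Matrix.dotProduct_mulVec, ← Matrix.mulVec_transpose,
    Matrix.J_transpose, Matrix.neg_mulVec, neg_dotProduct, dotProduct_comm]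

lemma Bsp_alt (x : VV F n) : Bsp F n x x = 0 := by
  rw [Bsp_apply]
  have hx : x = Sum.elim (x ∘ Sum.inl) (x ∘ Sum.inr) := by
    funext p; cases p <;> rfl
  set a := x ∘ Sum.inl
  set b := x ∘ Sum.inr
  rw [hx, Matrix.J, Matrix.fromBlocks_mulVec]
  simp only [Sum.elim_comp_inl, Sum.elim_comp_inr]
  have h1 : ((0 : Matrix (Fin n) (Fin n) F) *ᵥ a + (-1 : Matrix (Fin n) (Fin n) F) *ᵥ b) = -b := by
    simp [Matrix.neg_mulVec]
  have h2 : ((1 : Matrix (Fin n) (Fin n) F) *ᵥ a + (0 : Matrix (Fin n) (Fin n) F) *ᵥ b) = a := by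
    simp
  rw [h1, h2, sumElim_dotProduct_sumElim, dotProduct_neg, dotProduct_comm]
  ring

lemma Bsp_nondeg (x : VV F n) (h : ∀ y, Bsp F n x y = 0) : x = 0 := by
  have hv : x ᵥ* Matrix.J (Fin n) F = 0 := by
    funext r
    have := h (Pi.single r 1)
    rw [Bsp_apply, Matrix.dotProduct_mulVec] at this
    simpa [dotProduct_single] using this
  have : x ᵥ* (Matrix.J (Fin n) F * (- Matrix.J (Fin n) F)) = 0 := by
    rw [← Matrix.vecMul_vecMul, hv, Matrix.zero_vecMul]
  rwa [Matrix.mul_neg, Matrix.J_squared, neg_neg, Matrix.vecMul_one] at this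

end sp

section count
open Classical
variable (F : Type) [Field F] [Fintype F] (n : ℕ)

abbrev Wp := (VV F n) × (VV F n)

def flat {k : ℕ} (g : Fin k → Wp F n) : Fin k ⊕ Fin k → VV F n :=
  Sum.elim (fun i => (g i).1) (fun i => (g i).2)

def PP {k : ℕ} (g : Fin k → Wp F n) : Prop :=
  ∀ i j, Bsp F n (g i).1 (g j).1 = 0 ∧ Bsp F n (g i).2 (g j).2 = 0 ∧
    Bsp F n (g i).1 (g j).2 = (if i = j then -1 else 0)

def Cond {k : ℕ} (g : Fin k → Wp F n) (uv : Wp F n) : Prop :=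
  (∀ a, Bsp F n (flat F n g a) uv.1 = 0) ∧
  (∀ a, Bsp F n (flat F n g a) uv.2 = 0) ∧ Bsp F n uv.1 uv.2 = -1

variable {F n}

lemma gram_flat {k : ℕ} {g : Fin k → Wp F n} (hg : PP F n g) :
    (Matrix.of fun a b => Bsp F n (flat F n g a) (flat F n g b)) = Matrix.J (Fin k) F := by
  ext a b
  cases a with
  | inl i =>
    cases b with
    | inl j => simp [flat, Matrix.J, (hg i j).1]
    | inr j =>
      have := (hg i j).2.2
      simp only [flat, Matrix.J, Matrix.of_apply, Sum.elim_inl, Sum.elim_inr,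
        Matrix.fromBlocks_apply₁₂, Matrix.neg_apply, Matrix.one_apply, this]
      split <;> simp
  | inr i =>
    cases b with
    | inl j =>
      have h1 := (hg j i).2.2
      have h2 : Bsp F n (g i).2 (g j).1 = - Bsp F n (g j).1 (g i).2 := Bsp_skew _ _
      simp only [flat, Matrix.J, Matrix.of_apply, Sum.elim_inl, Sum.elim_inr,
        Matrix.fromBlocks_apply₂₁, Matrix.one_apply, h2, h1]
      rcases eq_or_ne i j with h | h
      · simp [h]
      · simp [h, Ne.symm h]
    | inr j => simp [flat, Matrix.J, (hg i j).2.1]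

lemma J_mul_negJ (k : ℕ) : Matrix.J (Fin k) F * (-(Matrix.J (Fin k) F)) = 1 := by
  rw [Matrix.mul_neg, Matrix.J_squared, neg_neg]

lemma nat_card_sigma {α : Type*} [Fintype α] (f : α → Type*) [∀ a, Finite (f a)] :
    Nat.card (Σ a, f a) = ∑ a : α, Nat.card (f a) := by
  letI : ∀ a, Fintype (f a) := fun a => Fintype.ofFinite _
  simp [Nat.card_eq_fintype_card, Fintype.card_sigma]

variable (q : ℕ) (hq : q = Fintype.card F)

include hq in
lemma card_VV : Nat.card (VV F n) = q ^ (2 * n) := by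
  subst hq
  simp [Nat.card_eq_fintype_card, Fintype.card_fun, two_mul]

include hq

lemma card_perp {k : ℕ} {g : Fin k → Wp F n} (hg : PP F n g) (hk : k ≤ n) :
    Nat.card {u : VV F n // ∀ a, Bsp F n (flat F n g a) u = 0} = q ^ (2*n - 2*k) := by
  set Φ : VV F n →+ ((Fin k ⊕ Fin k) → F) :=
    AddMonoidHom.mk' (fun x a => Bsp F n (flat F n g a) x)
      (fun x y => by funext a; simp) with hΦ
  have hsurj : Function.Surjective Φ := by
    have := surj_of_gram (Bsp F n) (flat F n g) (-(Matrix.J (Fin k) F))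
      (by rw [gram_flat hg]; exact J_mul_negJ k)
    exact this
  have hfib := fiber_card Φ hsurj 0
  have he : {x : VV F n // Φ x = 0} ≃ {u : VV F n // ∀ a, Bsp F n (flat F n g a) u = 0} := by
    apply Equiv.subtypeEquivRight
    intro x
    simp [hΦ, funext_iff]
  rw [Nat.card_congr he] at hfib
  have hcV : Nat.card (VV F n) = q ^ (2*n) := card_VV q hq
  have hcW : Nat.card ((Fin k ⊕ Fin k) → F) = q ^ (2*k) := by
    subst hq
    simp [Nat.card_eq_fintype_card, Fintype.card_fun, two_mul]
  rw [hcV, hcW] at hfib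
  have hqpos : 0 < q := by subst hq; exact Fintype.card_pos
  have : q ^ (2*n) = q ^ (2*n - 2*k) * q ^ (2*k) := by
    rw [← pow_add]; congr 1; omega
  rw [this] at hfib
  exact Nat.eq_of_mul_eq_mul_right (pow_pos hqpos _) hfib

lemma card_perp_ext {k : ℕ} {g : Fin k → Wp F n} (hg : PP F n g) (hk : k < n)
    {u : VV F n} (hu : u ≠ 0) (hup : ∀ a, Bsp F n (flat F n g a) u = 0) :
    Nat.card {v : VV F n // (∀ a, Bsp F n (flat F n g a) v = 0) ∧ Bsp F n u v = -1}
      = q ^ (2*n - 2*k - 1) := by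
  set Φ : VV F n →+ (((Fin k ⊕ Fin k) → F) × F) :=
    AddMonoidHom.mk' (fun x => ((fun a => Bsp F n (flat F n g a) x), Bsp F n u x))
      (fun x y => by simp [Prod.ext_iff]; funext a; simp) with hΦ
  have hsurj : Function.Surjective Φ := by
    have := surj_ext (Bsp F n) (fun x hx => Bsp_nondeg x hx) (flat F n g)
      (-(Matrix.J (Fin k) F)) (by rw [gram_flat hg]; exact J_mul_negJ k) u hu hup
    exact this
  have hfib := fiber_card Φ hsurj (0, -1)
  have he : {x : VV F n // Φ x = (0, -1)} ≃
      {v : VV F n // (∀ a, Bsp F n (flat F n g a) v = 0) ∧ Bsp F n u v = -1} := by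
    apply Equiv.subtypeEquivRight
    intro x
    simp [hΦ, Prod.ext_iff, funext_iff]
  rw [Nat.card_congr he] at hfib
  have hcV : Nat.card (VV F n) = q ^ (2*n) := card_VV q hq
  have hcW : Nat.card (((Fin k ⊕ Fin k) → F) × F) = q ^ (2*k+1) := by
    subst hq
    simp [Nat.card_eq_fintype_card, Fintype.card_fun, two_mul, pow_succ]
  rw [hcV, hcW] at hfib
  have hqpos : 0 < q := by subst hq; exact Fintype.card_pos
  have : q ^ (2*n) = q ^ (2*n - 2*k - 1) * q ^ (2*k+1) := by
    rw [← pow_add]; congr 1; omega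
  rw [this] at hfib
  exact Nat.eq_of_mul_eq_mul_right (pow_pos hqpos _) hfib

lemma card_fib {k : ℕ} {g : Fin k → Wp F n} (hg : PP F n g) (hk : k < n) :
    Nat.card {uv : Wp F n // Cond F n g uv}
      = (q ^ (2*n - 2*k) - 1) * q ^ (2*n - 2*k - 1) := by
  classical
  have e : {uv : Wp F n // Cond F n g uv} ≃
      Σ u : {u : VV F n // ∀ a, Bsp F n (flat F n g a) u = 0},
        {v : VV F n // (∀ a, Bsp F n (flat F n g a) v = 0) ∧ Bsp F n u.1 v = -1} :=
    { toFun := fun p => ⟨⟨p.1.1, p.2.1⟩, ⟨p.1.2, p.2.2.1, p.2.2.2⟩⟩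
      invFun := fun p => ⟨(p.1.1, p.2.1), p.1.2, p.2.2.1, p.2.2.2⟩
      left_inv := fun p => rfl
      right_inv := fun p => rfl }
  haveI : Fintype {u : VV F n // ∀ a, Bsp F n (flat F n g a) u = 0} := Fintype.ofFinite _
  rw [Nat.card_congr e, nat_card_sigma]
  have hval : ∀ u : {u : VV F n // ∀ a, Bsp F n (flat F n g a) u = 0},
      Nat.card {v : VV F n //
        (∀ a, Bsp F n (flat F n g a) v = 0) ∧ Bsp F n u.1 v = -1}
      = if (u.1 = 0) then 0 else q ^ (2*n - 2*k - 1) := by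
    intro u
    by_cases h0 : u.1 = 0
    · rw [if_pos h0, Nat.card_eq_zero]
      left
      constructor
      rintro ⟨v, hv1, hv2⟩
      rw [h0] at hv2
      simp only [map_zero, LinearMap.zero_apply] at hv2
      exact (neg_ne_zero.mpr (one_ne_zero)) hv2.symm
    · rw [if_neg h0]
      exact card_perp_ext q hq hg hk h0 u.2
  rw [Finset.sum_congr rfl (fun u _ => hval u)]
  have hz : ∀ a, Bsp F n (flat F n g a) (0 : VV F n) = 0 := fun a => by simp
  rw [Finset.sum_eq_sum_sdiff_singleton_add
    (Finset.mem_univ (⟨0, hz⟩ : {u : VV F n // ∀ a, Bsp F n (flat F n g a) u = 0}))]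
  rw [if_pos rfl, add_zero]
  rw [Finset.sum_congr rfl (fun u hu => if_neg (fun h0 =>
    (Finset.mem_sdiff.mp hu).2 (Finset.mem_singleton.mpr (Subtype.ext h0))))]
  rw [Finset.sum_const, smul_eq_mul]
  congr 1
  rw [Finset.card_sdiff_of_subset (Finset.singleton_subset_iff.mpr (Finset.mem_univ _)),
    Finset.card_singleton]
  have hcardU : (Finset.univ :
      Finset {u : VV F n // ∀ a, Bsp F n (flat F n g a) u = 0}).card = q ^ (2*n - 2*k) := by
    rw [Finset.card_univ, ← Nat.card_eq_fintype_card]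
    exact card_perp q hq hg hk.le
  rw [hcardU]


omit hq in
lemma PP_snoc_iff {k : ℕ} (g : Fin k → Wp F n) (uv : Wp F n) :
    PP F n (Fin.snoc g uv : Fin (k+1) → Wp F n) ↔ PP F n g ∧ Cond F n g uv := by
  constructor
  · intro h
    refine ⟨fun i j => ?_, fun a => ?_, fun a => ?_, ?_⟩
    · have := h i.castSucc j.castSucc
      simp only [Fin.snoc_castSucc, Fin.castSucc_inj] at this
      exact this
    · cases a with
      | inl i =>
        have := (h i.castSucc (Fin.last k)).1
        simpa [flat] using this
      | inr i =>
        have := (h (Fin.last k) i.castSucc).2.2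
        rw [if_neg (Fin.castSucc_lt_last i).ne'] at this
        simp only [Fin.snoc_castSucc, Fin.snoc_last] at this
        have hsk : Bsp F n (g i).2 uv.1 = - Bsp F n uv.1 (g i).2 := Bsp_skew _ _
        simp [flat, hsk, this]
    · cases a with
      | inl i =>
        have := (h i.castSucc (Fin.last k)).2.2
        rw [if_neg (Fin.castSucc_lt_last i).ne] at this
        simpa [flat] using this
      | inr i =>
        have := (h i.castSucc (Fin.last k)).2.1
        simpa [flat] using this
    · have := (h (Fin.last k) (Fin.last k)).2.2
      simpa using this
  · rintro ⟨hg, hc1, hc2, hc3⟩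
    intro i j
    refine Fin.lastCases ?_ (fun i => ?_) i
    · refine Fin.lastCases ?_ (fun j => ?_) j
      · simp only [Fin.snoc_last, if_pos rfl]
        exact ⟨Bsp_alt _, Bsp_alt _, hc3⟩
      · simp only [Fin.snoc_last, Fin.snoc_castSucc,
          if_neg (Fin.castSucc_lt_last j).ne']
        refine ⟨?_, ?_, ?_⟩
        · rw [Bsp_skew, show Bsp F n (g j).1 uv.1 = 0 from hc1 (Sum.inl j), neg_zero]
        · rw [Bsp_skew, show Bsp F n (g j).2 uv.2 = 0 from hc2 (Sum.inr j), neg_zero]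
        · rw [Bsp_skew, show Bsp F n (g j).2 uv.1 = 0 from hc1 (Sum.inr j), neg_zero]
    · refine Fin.lastCases ?_ (fun j => ?_) j
      · simp only [Fin.snoc_last, Fin.snoc_castSucc,
          if_neg (Fin.castSucc_lt_last i).ne]
        exact ⟨hc1 (Sum.inl i), hc2 (Sum.inr i), hc2 (Sum.inl i)⟩
      · simp only [Fin.snoc_castSucc, Fin.castSucc_inj]
        exact hg i j

lemma card_PP : ∀ k : ℕ, k ≤ n →
    Nat.card {g : Fin k → Wp F n // PP F n g}
      = ∏ i ∈ Finset.range k, ((q ^ (2*n - 2*i) - 1) * q ^ (2*n - 2*i - 1)) := by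
  intro k
  induction k with
  | zero =>
    intro _
    rw [Finset.range_zero, Finset.prod_empty]
    have htriv : ∀ g : Fin 0 → Wp F n, PP F n g := fun g i => i.elim0
    rw [Nat.card_congr (Equiv.subtypeUnivEquiv htriv), Nat.card_eq_fintype_card]
    simp
  | succ k ih =>
    intro hk1
    have hk : k < n := hk1
    classical
    have E1 : {x : (Fin k → Wp F n) × Wp F n // PP F n (Fin.snoc x.1 x.2 : Fin (k+1) → Wp F n)}
        ≃ {f : Fin (k+1) → Wp F n // PP F n f} := by
      refine Equiv.subtypeEquiv ⟨fun x => Fin.snoc x.1 x.2, fun f => (Fin.init f, f (Fin.last k)),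
        fun x => ?_, fun f => ?_⟩ (fun x => Iff.rfl)
      · simp
      · simp
    have E2 : {x : (Fin k → Wp F n) × Wp F n // PP F n (Fin.snoc x.1 x.2 : Fin (k+1) → Wp F n)}
        ≃ Σ g : Fin k → Wp F n, {uv : Wp F n // PP F n (Fin.snoc g uv : Fin (k+1) → Wp F n)} :=
      Equiv.subtypeProdEquivSigmaSubtype
        (fun (g : Fin k → Wp F n) (uv : Wp F n) => PP F n (Fin.snoc g uv : Fin (k+1) → Wp F n))
    have E3 : (Σ g : Fin k → Wp F n, {uv : Wp F n // PP F n (Fin.snoc g uv : Fin (k+1) → Wp F n)})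
        ≃ Σ g : Fin k → Wp F n, {uv : Wp F n // PP F n g ∧ Cond F n g uv} :=
      Equiv.sigmaCongrRight (fun g => Equiv.subtypeEquivRight (fun uv => PP_snoc_iff g uv))
    have E4 : (Σ g : Fin k → Wp F n, {uv : Wp F n // PP F n g ∧ Cond F n g uv})
        ≃ Σ g : {g : Fin k → Wp F n // PP F n g}, {uv : Wp F n // Cond F n g.1 uv} :=
      { toFun := fun p => ⟨⟨p.1, p.2.2.1⟩, ⟨p.2.1, p.2.2.2⟩⟩
        invFun := fun p => ⟨p.1.1, ⟨p.2.1, p.1.2, p.2.2⟩⟩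
        left_inv := fun p => rfl
        right_inv := fun p => rfl }
    rw [← Nat.card_congr E1, Nat.card_congr E2, Nat.card_congr E3, Nat.card_congr E4]
    haveI : Fintype {g : Fin k → Wp F n // PP F n g} := Fintype.ofFinite _
    rw [nat_card_sigma]
    rw [Finset.sum_congr rfl (fun g _ => card_fib q hq g.2 hk)]
    rw [Finset.sum_const, smul_eq_mul, Finset.card_univ, ← Nat.card_eq_fintype_card,
      ih (le_of_lt hk), Finset.prod_range_succ]

lemma card_symplectic :
    Nat.card (Matrix.symplecticGroup (Fin n) F)
      = ∏ i ∈ Finset.range n, ((q ^ (2*n - 2*i) - 1) * q ^ (2*n - 2*i - 1)) := by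
  have entry : ∀ (A : Matrix (Fin n ⊕ Fin n) (Fin n ⊕ Fin n) F) p r,
      (A * Matrix.J (Fin n) F * Aᵀ) p r = Bsp F n (A p) (A r) := by
    intro A p r
    rw [Bsp_apply]
    simp only [Matrix.mul_apply, Matrix.transpose_apply, Matrix.mulVec, dotProduct,
      Finset.sum_mul, Finset.mul_sum]
    rw [Finset.sum_comm]
    exact Finset.sum_congr rfl fun t _ => Finset.sum_congr rfl fun w _ => by ring
  have mem_iff_PP : ∀ A : Matrix (Fin n ⊕ Fin n) (Fin n ⊕ Fin n) F,
      A ∈ Matrix.symplecticGroup (Fin n) F ↔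
        PP F n (fun i => (A (Sum.inl i), A (Sum.inr i))) := by
    intro A
    rw [SymplecticGroup.mem_iff, ← Matrix.ext_iff]
    simp only [entry]
    constructor
    · intro h
      refine fun i j => ⟨?_, ?_, ?_⟩
      · rw [h (Sum.inl i) (Sum.inl j)]; simp [Matrix.J]
      · rw [h (Sum.inr i) (Sum.inr j)]; simp [Matrix.J]
      · rw [h (Sum.inl i) (Sum.inr j)]
        simp only [Matrix.J, Matrix.fromBlocks_apply₁₂, Matrix.neg_apply, Matrix.one_apply]
        split <;> simp
    · intro h p r
      cases p with
      | inl i =>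
        cases r with
        | inl j => rw [(h i j).1]; simp [Matrix.J]
        | inr j =>
          rw [(h i j).2.2]
          simp only [Matrix.J, Matrix.fromBlocks_apply₁₂, Matrix.neg_apply, Matrix.one_apply]
          split <;> simp
      | inr i =>
        cases r with
        | inl j =>
          rw [Bsp_skew, (h j i).2.2]
          simp only [Matrix.J, Matrix.fromBlocks_apply₂₁, Matrix.one_apply]
          rcases eq_or_ne i j with hij | hij
          · simp [hij]
          · simp [hij, Ne.symm hij]
        | inr j => rw [(h i j).2.1]; simp [Matrix.J]
  have e : Matrix.symplecticGroup (Fin n) F ≃ {g : Fin n → Wp F n // PP F n g} :=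
    { toFun := fun A => ⟨fun i => (A.1 (Sum.inl i), A.1 (Sum.inr i)), (mem_iff_PP A.1).mp A.2⟩
      invFun := fun g => ⟨flat F n g.1, (mem_iff_PP _).mpr g.2⟩
      left_inv := fun A => Subtype.ext (by funext p; cases p <;> rfl)
      right_inv := fun g => Subtype.ext (by funext i; rfl) }
  rw [Nat.card_congr e]
  exact card_PP q hq n le_rfl

end count

section arith
open Finset

variable {l q d : ℕ}

lemma dvd_iff_zmod (hq2 : 2 ≤ q) (e : ℕ) :
    l ∣ q ^ e - 1 ↔ ((q : ZMod l)) ^ e = 1 := by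
  have h1 : 1 ≤ q ^ e := Nat.one_le_pow _ _ (by omega)
  rw [← Nat.modEq_iff_dvd' h1]
  rw [show ((q : ZMod l)) ^ e = ((q ^ e : ℕ) : ZMod l) by push_cast; ring]
  rw [show (1 : ZMod l) = ((1 : ℕ) : ZMod l) by push_cast; ring]
  rw [ZMod.natCast_eq_natCast_iff]
  constructor
  · exact fun h => h.symm
  · exact fun h => h.symm

lemma even_of_dvd (hq2 : 2 ≤ q) (hd : 0 < d) (hdl : l ∣ q ^ d - 1)
    (hdmin : ∀ e, 0 < e → l ∣ q ^ e - 1 → d ≤ e) (heven : Even d)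
    (e : ℕ) (he : 0 < e) (hdvd : l ∣ q ^ e - 1) : Even e := by
  set x := (q : ZMod l) with hx
  have hxd : x ^ d = 1 := (dvd_iff_zmod hq2 d).mp hdl
  have hfin : IsOfFinOrder x := isOfFinOrder_iff_pow_eq_one.mpr ⟨d, hd, hxd⟩
  have hopos : 0 < orderOf x := orderOf_pos_iff.mpr hfin
  have hod : orderOf x ∣ d := orderOf_dvd_iff_pow_eq_one.mpr hxd
  have hle : d ≤ orderOf x :=
    hdmin _ hopos ((dvd_iff_zmod hq2 _).mpr (pow_orderOf_eq_one x))
  have heq : orderOf x = d := le_antisymm (Nat.le_of_dvd hd hod) hle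
  have hde : d ∣ e := heq ▸ orderOf_dvd_iff_pow_eq_one.mpr ((dvd_iff_zmod hq2 e).mp hdvd)
  obtain ⟨t, rfl⟩ := hde
  exact heven.mul_right t

lemma vl_odd_zero (hq2 : 2 ≤ q) (hd : 0 < d) (hdl : l ∣ q ^ d - 1)
    (hdmin : ∀ e, 0 < e → l ∣ q ^ e - 1 → d ≤ e) (heven : Even d)
    (e : ℕ) (he : Odd e) : padicValNat l (q ^ e - 1) = 0 := by
  apply padicValNat.eq_zero_of_not_dvd
  intro hdvd
  exact (Nat.not_even_iff_odd.mpr he)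
    (even_of_dvd hq2 hd hdl hdmin heven e he.pos hdvd)

lemma vl_prod [hfl : Fact l.Prime] (f : ℕ → ℕ) (m : ℕ) (hf : ∀ i, i < m → f i ≠ 0) :
    padicValNat l (∏ i ∈ range m, f i) = ∑ i ∈ range m, padicValNat l (f i) := by
  induction m with
  | zero => simp
  | succ m ih =>
    rw [Finset.prod_range_succ, Finset.sum_range_succ,
      padicValNat.mul (Finset.prod_ne_zero_iff.mpr (fun i hi => hf i (by
        simp only [Finset.mem_range] at hi; omega))) (hf m (by omega)),
      ih (fun i hi => hf i (by omega))]

lemma sum_even_parts (g : ℕ → ℕ) (hg : ∀ e, Odd e → g e = 0) (n : ℕ) :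
    ∑ j ∈ range (2 * n), g (j + 1) = ∑ i ∈ range n, g (2 * (i + 1)) := by
  induction n with
  | zero => simp
  | succ n ih =>
    rw [show 2 * (n + 1) = (2 * n + 1) + 1 by ring, Finset.sum_range_succ,
      Finset.sum_range_succ, Finset.sum_range_succ, ih,
      hg (2 * n + 1) (by exact ⟨n, by ring⟩)]
    norm_num
    ring_nf

end arith

/-- For an odd prime `l` with `l ∤ q` and `d` (the smallest positive integer with
`l ∣ q^d − 1`) even, the `l`-part of `|Sp(2n, 𝔽_q)|` equals the `l`-part of
`|GL_{2n}(𝔽_q)|`, and the Sylow `l`-subgroups of `Sp(2n, 𝔽_q)` are isomorphic to those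
of `GL_{2n}(𝔽_q)`. -/
theorem sylow_Sp_d_even (l p r q n d : ℕ) (hl : l.Prime) (hlodd : l ≠ 2)
    (hp : p.Prime) (hr : 0 < r) (hq : q = p ^ r) (hlq : ¬ l ∣ q)
    (F : Type) [Field F] [Fintype F] (hF : Fintype.card F = q)
    (hd : 0 < d) (hdl : l ∣ q ^ d - 1)
    (hdmin : ∀ e, 0 < e → l ∣ q ^ e - 1 → d ≤ e) (heven : Even d) :
    l ^ padicValNat l (Nat.card (Matrix.symplecticGroup (Fin n) F)) =
      l ^ padicValNat l (Nat.card (GL (Fin (2 * n)) F)) ∧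
    ∀ P : Sylow l (Matrix.symplecticGroup (Fin n) F),
      ∃ Q : Sylow l (GL (Fin (2 * n)) F),
        Nonempty ((P : Subgroup (Matrix.symplecticGroup (Fin n) F))
          ≃* (Q : Subgroup (GL (Fin (2 * n)) F))) := by
  haveI : Fact l.Prime := ⟨hl⟩
  have hq2 : 2 ≤ q := by
    rw [hq]
    calc 2 ≤ p := hp.two_le
    _ = p ^ 1 := (pow_one p).symm
    _ ≤ p ^ r := Nat.pow_le_pow_right hp.one_lt.le hr
  have hvq : ∀ m : ℕ, padicValNat l (q ^ m) = 0 := fun m =>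
    padicValNat.eq_zero_of_not_dvd (fun h => hlq (hl.dvd_of_dvd_pow h))
  have hne1 : ∀ m : ℕ, 0 < m → q ^ m - 1 ≠ 0 := by
    intro m hm
    have : 2 ≤ q ^ m := le_trans hq2 (Nat.le_self_pow hm.ne' q)
    omega
  have hqpowne : ∀ m : ℕ, q ^ m ≠ 0 := fun m => pow_ne_zero m (by omega)
  -- valuation of the symplectic group card
  have hvsp : padicValNat l (Nat.card (Matrix.symplecticGroup (Fin n) F))
      = ∑ i ∈ Finset.range n, padicValNat l (q ^ (2*n - 2*i) - 1) := by
    rw [card_symplectic q hF.symm]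
    rw [vl_prod _ n (fun i hi => Nat.mul_ne_zero (hne1 _ (by omega)) (hqpowne _))]
    refine Finset.sum_congr rfl (fun i hi => ?_)
    rw [padicValNat.mul (hne1 _ (by simp only [Finset.mem_range] at hi; omega)) (hqpowne _),
      hvq, add_zero]
  -- valuation of the general linear group card
  have hvgl : padicValNat l (Nat.card (GL (Fin (2*n)) F))
      = ∑ j ∈ Finset.range (2*n), padicValNat l (q ^ (j+1) - 1) := by
    rw [Matrix.card_GL_field, hF]
    rw [Fin.prod_univ_eq_prod_range (fun i => q ^ (2*n) - q ^ i) (2*n)]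
    have hfac : ∀ i ∈ Finset.range (2*n), q ^ (2*n) - q ^ i = q ^ i * (q ^ (2*n - i) - 1) := by
      intro i hi
      simp only [Finset.mem_range] at hi
      rw [Nat.mul_sub, mul_one, ← pow_add, show i + (2*n - i) = 2*n from by omega]
    rw [Finset.prod_congr rfl hfac]
    rw [vl_prod _ (2*n) (fun i hi => Nat.mul_ne_zero (hqpowne _) (hne1 _ (by omega)))]
    rw [Finset.sum_congr rfl (fun i hi => by
      rw [padicValNat.mul (hqpowne _) (hne1 _ (by
        simp only [Finset.mem_range] at hi; omega)), hvq, zero_add])]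
    rw [← Finset.sum_range_reflect (fun j => padicValNat l (q ^ (j+1) - 1)) (2*n)]
    refine Finset.sum_congr rfl (fun i hi => ?_)
    simp only [Finset.mem_range] at hi
    rw [show 2*n - 1 - i + 1 = 2*n - i from by omega]
  -- the two valuations agree
  have hveq : padicValNat l (Nat.card (Matrix.symplecticGroup (Fin n) F))
      = padicValNat l (Nat.card (GL (Fin (2*n)) F)) := by
    rw [hvsp, hvgl]
    rw [sum_even_parts (fun e => padicValNat l (q ^ e - 1))
      (fun e he => vl_odd_zero hq2 hd hdl hdmin heven e he) n]
    rw [← Finset.sum_range_reflect (fun i => padicValNat l (q ^ (2*(i+1)) - 1)) n]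
    refine Finset.sum_congr rfl (fun i hi => ?_)
    simp only [Finset.mem_range] at hi
    rw [show 2*(n - 1 - i + 1) = 2*n - 2*i from by omega]
  refine ⟨by rw [hveq], ?_⟩
  -- the embedding of the symplectic group into GL
  intro P
  let eI : (Fin n ⊕ Fin n) ≃ Fin (2*n) := finSumFinEquiv.trans (finCongr (by omega))
  let re := Matrix.reindexAlgEquiv F F eI
  let φ0 : Matrix.symplecticGroup (Fin n) F →*
      (Matrix (Fin n ⊕ Fin n) (Fin n ⊕ Fin n) F)ˣ :=
    { toFun := fun A => ⟨A.1, (A⁻¹).1,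
        by rw [← Submonoid.coe_mul, mul_inv_cancel, Submonoid.coe_one],
        by rw [← Submonoid.coe_mul, inv_mul_cancel, Submonoid.coe_one]⟩
      map_one' := Units.ext rfl
      map_mul' := fun A B => Units.ext rfl }
  have hφ0 : Function.Injective φ0 := by
    intro A B h
    exact Subtype.ext (congrArg Units.val h)
  let φ : Matrix.symplecticGroup (Fin n) F →* GL (Fin (2*n)) F :=
    (Units.map re.toAlgHom.toRingHom.toMonoidHom).comp φ0
  have hφ : Function.Injective φ :=
    (Units.map_injective (f := re.toAlgHom.toRingHom.toMonoidHom) re.injective).comp hφ0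
  have hcardP : Nat.card (P : Subgroup (Matrix.symplecticGroup (Fin n) F))
      = l ^ (Nat.card (Matrix.symplecticGroup (Fin n) F)).factorization l :=
    P.card_eq_multiplicity
  have hmapcard : Nat.card (Subgroup.map φ (P : Subgroup _))
      = Nat.card (P : Subgroup (Matrix.symplecticGroup (Fin n) F)) :=
    (Nat.card_congr (Subgroup.equivMapOfInjective _ φ hφ).toEquiv).symm
  have hQcard : Nat.card (Subgroup.map φ (P : Subgroup _))
      = l ^ (Nat.card (GL (Fin (2*n)) F)).factorization l := by
    rw [hmapcard, hcardP, Nat.factorization_def _ hl, Nat.factorization_def _ hl, hveq]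
  exact ⟨Sylow.ofCard _ hQcard, ⟨Subgroup.equivMapOfInjective _ φ hφ⟩⟩
end
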